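/- arXiv:1405.1902 — 2 statements merged into one kernel-verified Lean document; each statement's English description precedes it below -/
import Mathlib

section
/- Let u be a minimizer of the functional 𝓔(u) = E(u) + E_C(u) over the admissible class 𝒜. Then for every index i ∈ {1,…,n} and every k ∈ {1,…,m}, the scalar component ω_i(t) = φ_iᵀ M u(t) satisfies the fourth-order wiggly-spline ODE ω_i''''(t) + 2(λ_i − 2δ_i²) ω_i''(t) + λ_i (λ_i ω_i(t) + g_i) = 0 for all t in the open interval (t_{k−1}, t_k). Equivalently, on each subinterval u is of the form u(t) = Σ_i ω_i(t) φ_i with each ω_i a wiggly spline. -/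
open Matrix Set

/-- The force residual `F(t) = M ü(t) + D u̇(t) + K u(t) + g` of a trajectory `w`. -/
noncomputable def forceResidual {n : ℕ} (M D K : Matrix (Fin n) (Fin n) ℝ) (g : Fin n → ℝ)
    (w : ℝ → Fin n → ℝ) (s : ℝ) : Fin n → ℝ :=
  M.mulVec (deriv (deriv w) s) + D.mulVec (deriv w s) + K.mulVec (w s) + g

/-- The elastic (spacetime) energy
`E(w) = (1/2) ∫_{t₀}^{t_m} ‖M ẅ + D ẇ + K w + g‖²_{M⁻¹} dt`. -/
noncomputable def elasticEnergy {n : ℕ} (M D K : Matrix (Fin n) (Fin n) ℝ) (g : Fin n → ℝ)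
    (t0 tm : ℝ) (w : ℝ → Fin n → ℝ) : ℝ :=
  (1/2) * ∫ s in t0..tm,
    (forceResidual M D K g w s) ⬝ᵥ (M⁻¹.mulVec (forceResidual M D K g w s))

/-- The least-squares constraint energy
`E_C(w) = (1/2) ∑_{k=0}^{m} (c_A ‖A_k w(t_k) − a_k‖² + c_B ‖B_k ẇ(t_k) − b_k‖²)`,
where the velocity is the derivative within `[t₀, t_m]`. -/
noncomputable def constraintEnergy {n : ℕ} (m : ℕ) (t : ℕ → ℝ) (p q : ℕ → ℕ)
    (A : (k : ℕ) → Matrix (Fin (p k)) (Fin n) ℝ)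
    (B : (k : ℕ) → Matrix (Fin (q k)) (Fin n) ℝ)
    (a : (k : ℕ) → Fin (p k) → ℝ) (b : (k : ℕ) → Fin (q k) → ℝ)
    (cA cB : ℝ) (w : ℝ → Fin n → ℝ) : ℝ :=
  (1/2) * ∑ k ∈ Finset.range (m+1),
    (cA * (((A k).mulVec (w (t k)) - a k) ⬝ᵥ ((A k).mulVec (w (t k)) - a k))
      + cB * (((B k).mulVec (derivWithin w (Icc (t 0) (t m)) (t k)) - b k) ⬝ᵥ
              ((B k).mulVec (derivWithin w (Icc (t 0) (t m)) (t k)) - b k)))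

/-- The admissible class `𝒜`: functions that are `C¹` on `[t₀, t_m]` and `C⁴` on each
subinterval `[t_{k−1}, t_k]`, `k = 1, …, m`. -/
def Admissible {n : ℕ} (m : ℕ) (t : ℕ → ℝ) (w : ℝ → Fin n → ℝ) : Prop :=
  ContDiffOn ℝ 1 w (Icc (t 0) (t m)) ∧
  ∀ k, 1 ≤ k → k ≤ m → ContDiffOn ℝ 4 w (Icc (t (k-1)) (t k))


open MeasureTheory intervalIntegral


lemma ws_dot_sum {n : ℕ} (x : Fin n → ℝ) (c : Fin n → ℝ) (φ : Fin n → Fin n → ℝ) :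
    x ⬝ᵥ (∑ i, c i • φ i) = ∑ i, c i * (x ⬝ᵥ φ i) := by
  simp only [dotProduct, Finset.sum_apply, Pi.smul_apply, smul_eq_mul, Finset.mul_sum]
  rw [Finset.sum_comm]
  apply Finset.sum_congr rfl; intro i _
  apply Finset.sum_congr rfl; intro j _; ring

lemma ws_complete {n : ℕ} (M : Matrix (Fin n) (Fin n) ℝ) (φ : Fin n → Fin n → ℝ)
    (hOrtho : ∀ i j, φ i ⬝ᵥ M.mulVec (φ j) = if i = j then (1:ℝ) else 0) (x : Fin n → ℝ) :
    ∑ i, (φ i ⬝ᵥ M.mulVec x) • φ i = x := by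
  set Φ : Matrix (Fin n) (Fin n) ℝ := Matrix.of φ with hΦ
  have h1 : Φ * M * Φᵀ = 1 := by
    ext i j
    have h := hOrtho i j
    simp only [Matrix.mulVec, dotProduct] at h
    simp only [Matrix.mul_apply, Matrix.one_apply, Matrix.transpose_apply, hΦ, Matrix.of_apply]
    rw [← h]
    simp_rw [Finset.sum_mul, Finset.mul_sum]
    rw [Finset.sum_comm]
    apply Finset.sum_congr rfl; intro l _
    apply Finset.sum_congr rfl; intro k _; ring
  have h2 : Φᵀ * (Φ * M) = 1 := mul_eq_one_comm.mp h1
  have key : ∑ i, (φ i ⬝ᵥ M.mulVec x) • φ i = Φᵀ.mulVec ((Φ * M).mulVec x) := by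
    funext j
    simp only [Finset.sum_apply, Pi.smul_apply, smul_eq_mul, Matrix.mulVec, dotProduct,
      Matrix.transpose_apply, Matrix.mul_apply, hΦ, Matrix.of_apply]
    apply Finset.sum_congr rfl; intro i _
    simp_rw [Finset.sum_mul, Finset.mul_sum]
    rw [Finset.sum_comm]
    apply Finset.sum_congr rfl; intro l _
    rw [Finset.sum_mul]
    apply Finset.sum_congr rfl; intro k _; ring
  rw [key, Matrix.mulVec_mulVec, h2, Matrix.one_mulVec]

lemma ws_pair {n : ℕ} (M : Matrix (Fin n) (Fin n) ℝ) (hMpd : M.PosDef)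
    (φ : Fin n → Fin n → ℝ)
    (hOrtho : ∀ i j, φ i ⬝ᵥ M.mulVec (φ j) = if i = j then (1:ℝ) else 0) (x y : Fin n → ℝ) :
    x ⬝ᵥ M⁻¹.mulVec y = ∑ i, (φ i ⬝ᵥ x) * (φ i ⬝ᵥ y) := by
  have hdet : IsUnit M.det := (Matrix.isUnit_iff_isUnit_det M).mp hMpd.isUnit
  have hMy : M.mulVec (M⁻¹.mulVec y) = y := by
    rw [Matrix.mulVec_mulVec, Matrix.mul_nonsing_inv M hdet, Matrix.one_mulVec]
  have hrep : ∑ i, (φ i ⬝ᵥ y) • φ i = M⁻¹.mulVec y := by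
    have h := ws_complete M φ hOrtho (M⁻¹.mulVec y)
    rw [hMy] at h; exact h
  rw [← hrep, ws_dot_sum]
  apply Finset.sum_congr rfl; intro i _
  rw [dotProduct_comm x (φ i)]; ring

lemma ws_eigT {n : ℕ} (M K : Matrix (Fin n) (Fin n) ℝ) (hMsymm : M.IsSymm) (hKsymm : K.IsSymm)
    (φi : Fin n → ℝ) (lami : ℝ) (hEig : K.mulVec φi = lami • M.mulVec φi) (x : Fin n → ℝ) :
    φi ⬝ᵥ K.mulVec x = lami * (φi ⬝ᵥ M.mulVec x) := by
  rw [Matrix.dotProduct_mulVec, ← Matrix.mulVec_transpose, hKsymm.eq, hEig,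
    Matrix.dotProduct_mulVec φi M x, ← Matrix.mulVec_transpose, hMsymm.eq]
  rw [smul_dotProduct]; simp [smul_eq_mul]


lemma ws_min_zero (A B : ℝ) (h : ∀ ε : ℝ, 0 ≤ ε * A + ε ^ 2 * B) : A = 0 := by
  by_contra hA
  set c : ℝ := 1 / (|B| + 1) with hc
  have hB1 : (0:ℝ) < |B| + 1 := by positivity
  have hc0 : 0 < c := by positivity
  have hcB : c * B < 1 := by
    rw [hc, div_mul_eq_mul_div, div_lt_one hB1, one_mul]
    have := le_abs_self B; linarith
  have hA2 : 0 < A ^ 2 := by positivity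
  have h1 := h (-(A * c))
  nlinarith [mul_pos (mul_pos hc0 hA2) (sub_pos.mpr hcB)]

lemma ws_deriv_zero_of_nmem_tsupport {η : ℝ → ℝ} {x : ℝ} (hx : x ∉ tsupport η) :
    deriv η x = 0 := by
  have hopen : IsOpen (tsupport η)ᶜ := (isClosed_tsupport η).isOpen_compl
  have hev : η =ᶠ[nhds x] (fun _ => (0:ℝ)) := by
    filter_upwards [hopen.mem_nhds hx] with y hy
    exact image_eq_zero_of_notMem_tsupport hy
  rw [hev.deriv_eq, deriv_const]

lemma ws_dubois (a b : ℝ) (hab : a < b) (r : ℝ → ℝ) (e1 e0 : ℝ)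
    (hr : ContDiffOn ℝ 2 r (Ioo a b))
    (H : ∀ c d : ℝ, a < c → c < d → d < b → ∀ η : ℝ → ℝ, ContDiff ℝ (↑(⊤:ℕ∞)) η →
      tsupport η ⊆ Ioo c d →
      (∫ s in c..d, r s * (deriv (deriv η) s + e1 * deriv η s + e0 * η s)) = 0) :
    ∀ s₀ ∈ Ioo a b, deriv (deriv r) s₀ - e1 * deriv r s₀ + e0 * r s₀ = 0 := by
  intro s₀ hs₀
  have hIoo : IsOpen (Ioo a b) := isOpen_Ioo
  -- r1 = r', r2 = r''
  set r1 : ℝ → ℝ := deriv r with hr1def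
  set r2 : ℝ → ℝ := deriv r1 with hr2def
  have hr1 : ContDiffOn ℝ 1 r1 (Ioo a b) := hr.deriv_of_isOpen hIoo (by norm_num)
  have hr2' : ContDiffOn ℝ 0 r2 (Ioo a b) := hr1.deriv_of_isOpen hIoo (by norm_num)
  have hr2 : ContinuousOn r2 (Ioo a b) := hr2'.continuousOn
  have hrc : ContinuousOn r (Ioo a b) := hr.continuousOn
  have hr1c : ContinuousOn r1 (Ioo a b) := hr1.continuousOn
  have hdr : ∀ x ∈ Ioo a b, HasDerivAt r (r1 x) x := fun x hx =>
    ((hr.differentiableOn (by norm_num)).differentiableAt (hIoo.mem_nhds hx)).hasDerivAt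
  have hdr1 : ∀ x ∈ Ioo a b, HasDerivAt r1 (r2 x) x := fun x hx =>
    ((hr1.differentiableOn (by norm_num)).differentiableAt (hIoo.mem_nhds hx)).hasDerivAt
  set ψ : ℝ → ℝ := fun s => r2 s - e1 * r1 s + e0 * r s with hψdef
  have hψc : ContinuousOn ψ (Ioo a b) :=
    (hr2.sub (hr1c.const_smul e1)).add (hrc.const_smul e0)
  suffices hψ0 : ψ s₀ = 0 by
    exact hψ0
  by_contra hψ
  -- find ρ1 such that ball s₀ ρ1 ⊆ Ioo a b and |ψ x - ψ s₀| < |ψ s₀|/2 there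
  have hca : ContinuousAt ψ s₀ := hψc.continuousAt (hIoo.mem_nhds hs₀)
  have habs : 0 < |ψ s₀| / 2 := by positivity
  have hev : {x | |ψ x - ψ s₀| < |ψ s₀| / 2} ∈ nhds s₀ := by
    have := hca.eventually (Metric.ball_mem_nhds (ψ s₀) habs)
    filter_upwards [this] with y hy
    simpa [Real.dist_eq] using hy
  obtain ⟨ρ1, hρ1pos, hρ1⟩ := Metric.mem_nhds_iff.mp
    (Filter.inter_mem hev (hIoo.mem_nhds hs₀))
  set ρ : ℝ := ρ1 / 5 with hρdef
  have hρpos : 0 < ρ := by positivity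
  have hsub : Icc (s₀ - 2*ρ) (s₀ + 2*ρ) ⊆ Metric.ball s₀ ρ1 := by
    intro x hx
    simp only [Metric.mem_ball, Real.dist_eq, abs_lt]
    cases' hx with h1 h2
    constructor <;> [linarith; linarith]
  set c : ℝ := s₀ - 2*ρ with hcdef
  set d : ℝ := s₀ + 2*ρ with hddef
  have hIccIoo : Icc c d ⊆ Ioo a b := fun x hx => (hρ1 (hsub hx)).2
  have hac : a < c := (hIccIoo (left_mem_Icc.mpr (by linarith))).1
  have hdb : d < b := (hIccIoo (right_mem_Icc.mpr (by linarith))).2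
  have hcd : c < d := by simp [hcdef, hddef]; linarith
  -- the bump
  set f : ContDiffBump s₀ := ⟨ρ/2, ρ, by positivity, by linarith⟩ with hfdef
  set η : ℝ → ℝ := ⇑f with hηdef
  have hηsmooth : ContDiff ℝ (↑(⊤:ℕ∞)) η := f.contDiff
  have hηsupp : tsupport η ⊆ Ioo c d := by
    rw [hηdef, f.tsupport_eq, Real.closedBall_eq_Icc]
    intro x hx
    constructor
    · have := hx.1; simp only [hfdef] at this; simp [hcdef]; linarith
    · have := hx.2; simp only [hfdef] at this; simp [hddef]; linarith
  have hI := H c d hac hcd hdb η hηsmooth hηsupp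
  have hsubI : uIcc c d ⊆ Ioo a b := by rw [uIcc_of_le hcd.le]; exact hIccIoo
  have hdiffη : Differentiable ℝ η := hηsmooth.differentiable (by simp)
  have hηd1 : ContDiff ℝ (↑(⊤:ℕ∞)) (deriv η) := (contDiff_infty_iff_deriv.mp hηsmooth).2
  have hdiffη1 : Differentiable ℝ (deriv η) := hηd1.differentiable (by simp)
  have hcη : Continuous η := hηsmooth.continuous
  have hcη1 : Continuous (deriv η) := hηd1.continuous
  have hcη2 : Continuous (deriv (deriv η)) := (contDiff_infty_iff_deriv.mp hηd1).2.continuous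
  have hη_c : η c = 0 := image_eq_zero_of_notMem_tsupport (fun h => absurd (hηsupp h).1 (lt_irrefl c))
  have hη_d : η d = 0 := image_eq_zero_of_notMem_tsupport (fun h => absurd (hηsupp h).2 (lt_irrefl d))
  have hη1_c : deriv η c = 0 := ws_deriv_zero_of_nmem_tsupport (fun h => absurd (hηsupp h).1 (lt_irrefl c))
  have hη1_d : deriv η d = 0 := ws_deriv_zero_of_nmem_tsupport (fun h => absurd (hηsupp h).2 (lt_irrefl d))
  have hrI : ContinuousOn r (uIcc c d) := hrc.mono hsubI
  have hr1I : ContinuousOn r1 (uIcc c d) := hr1c.mono hsubI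
  have hr2I : ContinuousOn r2 (uIcc c d) := hr2.mono hsubI
  have hDr : ∀ x ∈ uIcc c d, HasDerivAt r (r1 x) x := fun x hx => hdr x (hsubI hx)
  have hDr1 : ∀ x ∈ uIcc c d, HasDerivAt r1 (r2 x) x := fun x hx => hdr1 x (hsubI hx)
  have hDη : ∀ x ∈ uIcc c d, HasDerivAt η (deriv η x) x := fun x _ => (hdiffη x).hasDerivAt
  have hDη1 : ∀ x ∈ uIcc c d, HasDerivAt (deriv η) (deriv (deriv η) x) x :=
    fun x _ => (hdiffη1 x).hasDerivAt
  have II1 : IntervalIntegrable r1 volume c d := hr1I.intervalIntegrable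
  have II2 : IntervalIntegrable r2 volume c d := hr2I.intervalIntegrable
  have IIη0 : IntervalIntegrable η volume c d := (hcη.continuousOn).intervalIntegrable
  have IIη1 : IntervalIntegrable (deriv η) volume c d := (hcη1.continuousOn).intervalIntegrable
  have IIη2 : IntervalIntegrable (deriv (deriv η)) volume c d := (hcη2.continuousOn).intervalIntegrable
  have ibp1 : (∫ s in c..d, r s * deriv (deriv η) s) = - ∫ s in c..d, r1 s * deriv η s := by
    rw [integral_mul_deriv_eq_deriv_mul hDr hDη1 II1 IIη2, hη1_c, hη1_d]; ring
  have ibp2 : (∫ s in c..d, r1 s * deriv η s) = - ∫ s in c..d, r2 s * η s := by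
    rw [integral_mul_deriv_eq_deriv_mul hDr1 hDη II2 IIη1, hη_c, hη_d]; ring
  have ibp3 : (∫ s in c..d, r s * deriv η s) = - ∫ s in c..d, r1 s * η s := by
    rw [integral_mul_deriv_eq_deriv_mul hDr hDη II1 IIη1, hη_c, hη_d]; ring
  have i1 : IntervalIntegrable (fun s => r s * deriv (deriv η) s) volume c d :=
    (hrI.mul hcη2.continuousOn).intervalIntegrable
  have i2 : IntervalIntegrable (fun s => e1 * (r s * deriv η s)) volume c d :=
    (continuousOn_const.mul (hrI.mul hcη1.continuousOn)).intervalIntegrable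
  have i3 : IntervalIntegrable (fun s => e0 * (r s * η s)) volume c d :=
    (continuousOn_const.mul (hrI.mul hcη.continuousOn)).intervalIntegrable
  have hsplit : (∫ s in c..d, r s * (deriv (deriv η) s + e1 * deriv η s + e0 * η s))
      = (∫ s in c..d, r s * deriv (deriv η) s) + (e1 * ∫ s in c..d, r s * deriv η s)
        + (e0 * ∫ s in c..d, r s * η s) := by
    rw [← intervalIntegral.integral_const_mul, ← intervalIntegral.integral_const_mul, ← integral_add i1 i2,
      ← integral_add (i1.add i2) i3]
    apply integral_congr; intro x _; ring
  have j1 : IntervalIntegrable (fun s => r2 s * η s) volume c d :=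
    (hr2I.mul hcη.continuousOn).intervalIntegrable
  have j2 : IntervalIntegrable (fun s => e1 * (r1 s * η s)) volume c d :=
    (continuousOn_const.mul (hr1I.mul hcη.continuousOn)).intervalIntegrable
  have j3 : IntervalIntegrable (fun s => e0 * (r s * η s)) volume c d := i3
  have hψsplit : (∫ s in c..d, ψ s * η s)
      = (∫ s in c..d, r2 s * η s) - (e1 * ∫ s in c..d, r1 s * η s)
        + (e0 * ∫ s in c..d, r s * η s) := by
    rw [← intervalIntegral.integral_const_mul, ← intervalIntegral.integral_const_mul, ← integral_sub j1 j2,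
      ← integral_add (j1.sub j2) j3]
    apply integral_congr; intro x _; simp only [hψdef]; ring
  rw [hsplit, ibp1, ibp2, ibp3] at hI
  have hψη : (∫ s in c..d, ψ s * η s) = 0 := by rw [hψsplit]; linarith
  -- contradiction via positivity
  have hρρ1 : Metric.ball s₀ ρ ⊆ Metric.ball s₀ ρ1 := Metric.ball_subset_ball (by linarith)
  have hgood : ∀ x ∈ Metric.ball s₀ ρ, |ψ x - ψ s₀| < |ψ s₀| / 2 :=
    fun x hx => (hρ1 (hρρ1 hx)).1
  set σ : ℝ := if 0 < ψ s₀ then 1 else -1 with hσdef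
  have hσψ : ∀ x ∈ Metric.ball s₀ ρ, |ψ s₀| / 2 ≤ σ * ψ x := by
    intro x hx
    have h := hgood x hx
    rw [abs_lt] at h
    rcases lt_or_ge 0 (ψ s₀) with hpos | hneg
    · rw [hσdef, if_pos hpos, one_mul]
      rw [abs_of_pos hpos] at h ⊢
      linarith [h.1]
    · have hlt : ψ s₀ < 0 := lt_of_le_of_ne hneg hψ
      rw [hσdef, if_neg (not_lt.mpr hneg), neg_one_mul]
      rw [abs_of_neg hlt] at h ⊢
      linarith [h.2]
  have hηnn : ∀ x, 0 ≤ η x := f.nonneg'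
  have hηzero : ∀ x, x ∉ Metric.ball s₀ ρ → η x = 0 := by
    intro x hx
    apply Function.notMem_support.mp
    rw [hηdef, f.support_eq]
    exact hx
  have hnn : ∀ x ∈ Icc c d, 0 ≤ σ * (ψ x * η x) := by
    intro x hx
    by_cases hb : x ∈ Metric.ball s₀ ρ
    · have h1 := hσψ x hb
      have h2 := hηnn x
      have h3 : 0 < |ψ s₀| / 2 := habs
      rw [← mul_assoc]
      exact mul_nonneg (le_trans h3.le h1) h2
    · rw [hηzero x hb]; ring_nf; exact le_refl 0
  set m1 : ℝ := s₀ - ρ/2 with hm1def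
  set m2 : ℝ := s₀ + ρ/2 with hm2def
  have hcm1 : c ≤ m1 := by rw [hcdef, hm1def]; linarith
  have hm1m2 : m1 ≤ m2 := by rw [hm1def, hm2def]; linarith
  have hm2d : m2 ≤ d := by rw [hm2def, hddef]; linarith
  have hgc : ContinuousOn (fun x => σ * (ψ x * η x)) (Icc c d) :=
    continuousOn_const.mul ((hψc.mono hIccIoo).mul hcη.continuousOn)
  have hInt1 : IntervalIntegrable (fun x => σ * (ψ x * η x)) volume c m1 :=
    (hgc.mono (by rw [uIcc_of_le hcm1]; exact Icc_subset_Icc le_rfl (by linarith))).intervalIntegrable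
  have hInt2 : IntervalIntegrable (fun x => σ * (ψ x * η x)) volume m1 m2 :=
    (hgc.mono (by rw [uIcc_of_le hm1m2]; exact Icc_subset_Icc (by linarith) (by linarith))).intervalIntegrable
  have hInt3 : IntervalIntegrable (fun x => σ * (ψ x * η x)) volume m2 d :=
    (hgc.mono (by rw [uIcc_of_le hm2d]; exact Icc_subset_Icc (by linarith) le_rfl)).intervalIntegrable
  have hsum : (∫ x in c..m1, σ * (ψ x * η x)) + (∫ x in m1..m2, σ * (ψ x * η x))
      + (∫ x in m2..d, σ * (ψ x * η x)) = ∫ x in c..d, σ * (ψ x * η x) := by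
    rw [integral_add_adjacent_intervals hInt1 hInt2]
    exact integral_add_adjacent_intervals (hInt1.trans hInt2) hInt3
  have htot : (∫ x in c..d, σ * (ψ x * η x)) = 0 := by
    rw [intervalIntegral.integral_const_mul]
    rw [show (∫ x in c..d, ψ x * η x) = 0 from hψη]
    ring
  have hside1 : 0 ≤ ∫ x in c..m1, σ * (ψ x * η x) :=
    integral_nonneg hcm1 (fun x hx => hnn x ⟨hx.1, le_trans hx.2 (by linarith)⟩)
  have hside3 : 0 ≤ ∫ x in m2..d, σ * (ψ x * η x) :=
    integral_nonneg hm2d (fun x hx => hnn x ⟨le_trans (by linarith : c ≤ m2) hx.1, hx.2⟩)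
  have hmid : ρ * (|ψ s₀| / 2) ≤ ∫ x in m1..m2, σ * (ψ x * η x) := by
    have hconst : (∫ _ in m1..m2, |ψ s₀| / 2) = ρ * (|ψ s₀| / 2) := by
      rw [intervalIntegral.integral_const, smul_eq_mul]
      congr 1
      rw [hm1def, hm2def]; ring
    rw [← hconst]
    apply integral_mono_on hm1m2 (intervalIntegrable_const) hInt2
    intro x hx
    have hxball : x ∈ Metric.ball s₀ ρ := by
      simp only [Metric.mem_ball, Real.dist_eq, abs_lt]
      cases' hx with h1 h2
      rw [hm1def] at h1; rw [hm2def] at h2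
      constructor <;> linarith
    have hη1 : η x = 1 := by
      apply f.one_of_mem_closedBall
      simp only [Metric.mem_closedBall, Real.dist_eq, abs_le]
      cases' hx with h1 h2
      rw [hm1def] at h1; rw [hm2def] at h2
      constructor <;> [linarith; linarith]
    rw [hη1, mul_one]
    exact hσψ x hxball
  have : 0 < ρ * (|ψ s₀| / 2) := by positivity
  linarith


lemma ws_contDiffOn_modal {n : ℕ} (M : Matrix (Fin n) (Fin n) ℝ) (c : Fin n → ℝ)
    {u : ℝ → Fin n → ℝ} {S : Set ℝ} {nn : WithTop ℕ∞} (h : ContDiffOn ℝ nn u S) :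
    ContDiffOn ℝ nn (fun s => c ⬝ᵥ M.mulVec (u s)) S := by
  have : (fun s => c ⬝ᵥ M.mulVec (u s)) = fun s => ∑ r, (c ᵥ* M) r * u s r := by
    funext s
    rw [Matrix.dotProduct_mulVec]
    rfl
  rw [this]
  apply ContDiffOn.sum
  intro r _
  exact contDiffOn_const.mul (contDiffOn_pi.mp h r)

lemma ws_hasDerivAt_modal {n : ℕ} (M : Matrix (Fin n) (Fin n) ℝ) (c : Fin n → ℝ)
    {u : ℝ → Fin n → ℝ} {y : Fin n → ℝ} {s : ℝ} (h : HasDerivAt u y s) :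
    HasDerivAt (fun s => c ⬝ᵥ M.mulVec (u s)) (c ⬝ᵥ M.mulVec y) s := by
  have h1 : ∀ r, HasDerivAt (fun s => u s r) (y r) s := fun r => hasDerivAt_pi.mp h r
  have h2 : HasDerivAt (fun s => ∑ r, (c ᵥ* M) r * u s r) (∑ r, (c ᵥ* M) r * y r) s :=
    HasDerivAt.fun_sum (fun r _ => (h1 r).const_mul _)
  have e1 : (fun s => c ⬝ᵥ M.mulVec (u s)) = fun s => ∑ r, (c ᵥ* M) r * u s r := by
    funext s; rw [Matrix.dotProduct_mulVec]; rfl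
  have e2 : c ⬝ᵥ M.mulVec y = ∑ r, (c ᵥ* M) r * y r := by
    rw [Matrix.dotProduct_mulVec]; rfl
  rw [e1, e2]
  exact h2

lemma ws_contOn_mulVec {n : ℕ} (M : Matrix (Fin n) (Fin n) ℝ)
    {u : ℝ → Fin n → ℝ} {S : Set ℝ} (h : ContinuousOn u S) :
    ContinuousOn (fun s => M.mulVec (u s)) S := by
  rw [continuousOn_pi]
  intro r
  simp only [Matrix.mulVec, dotProduct]
  apply continuousOn_finset_sum
  intro cc _
  exact continuousOn_const.mul (continuousOn_pi.mp h cc)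

lemma ws_contOn_dot {n : ℕ} {v w : ℝ → Fin n → ℝ} {S : Set ℝ}
    (hv : ContinuousOn v S) (hw : ContinuousOn w S) :
    ContinuousOn (fun s => v s ⬝ᵥ w s) S := by
  simp only [dotProduct]
  apply continuousOn_finset_sum
  intro cc _
  exact (continuousOn_pi.mp hv cc).mul (continuousOn_pi.mp hw cc)

lemma ws_Iu_integrable {n : ℕ} (M D K : Matrix (Fin n) (Fin n) ℝ) (g : Fin n → ℝ)
    (u : ℝ → Fin n → ℝ) (ta tb : ℝ) (hab : ta < tb)
    (hu4 : ContDiffOn ℝ 4 u (Icc ta tb)) :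
    IntervalIntegrable
      (fun s => (forceResidual M D K g u s) ⬝ᵥ (M⁻¹.mulVec (forceResidual M D K g u s)))
      volume ta tb := by
  set S := Icc ta tb with hSdef
  set U1 := derivWithin u S with hU1def
  set U2 := derivWithin U1 S with hU2def
  have hUD : UniqueDiffOn ℝ S := uniqueDiffOn_Icc hab
  have hU1 : ContDiffOn ℝ 3 U1 S := hu4.derivWithin hUD (by norm_num)
  have hU2 : ContDiffOn ℝ 2 U2 S := hU1.derivWithin hUD (by norm_num)
  set FR := fun s => M.mulVec (U2 s) + D.mulVec (U1 s) + K.mulVec (u s) + g with hFRdef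
  have hFRc : ContinuousOn FR S := by
    apply ContinuousOn.add
    apply ContinuousOn.add
    apply ContinuousOn.add
    · exact ws_contOn_mulVec M hU2.continuousOn
    · exact ws_contOn_mulVec D hU1.continuousOn
    · exact ws_contOn_mulVec K hu4.continuousOn
    · exact continuousOn_const
  have hGc : ContinuousOn (fun s => FR s ⬝ᵥ M⁻¹.mulVec (FR s)) S :=
    ws_contOn_dot hFRc (ws_contOn_mulVec M⁻¹ hFRc)
  have hEq : EqOn (fun s => (forceResidual M D K g u s) ⬝ᵥ (M⁻¹.mulVec (forceResidual M D K g u s)))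
      (fun s => FR s ⬝ᵥ M⁻¹.mulVec (FR s)) (Ioo ta tb) := by
    intro s hs
    have hmem : S ∈ nhds s := by rw [hSdef]; exact Icc_mem_nhds hs.1 hs.2
    have h1 : deriv u s = U1 s := (derivWithin_of_mem_nhds hmem).symm
    have h2 : deriv (deriv u) s = U2 s := by
      have heq : EqOn (deriv u) U1 (Ioo ta tb) := fun x hx =>
        (derivWithin_of_mem_nhds (by rw [hSdef]; exact Icc_mem_nhds hx.1 hx.2)).symm
      have hev : deriv u =ᶠ[nhds s] U1 := by
        filter_upwards [isOpen_Ioo.mem_nhds hs] with y hy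
        exact heq hy
      rw [hev.deriv_eq]
      exact (derivWithin_of_mem_nhds hmem).symm
    simp only [forceResidual, hFRdef]
    rw [h1, h2]
  have hG : IntegrableOn (fun s => FR s ⬝ᵥ M⁻¹.mulVec (FR s)) S volume :=
    hGc.integrableOn_Icc
  have hIoo : IntegrableOn
      (fun s => (forceResidual M D K g u s) ⬝ᵥ (M⁻¹.mulVec (forceResidual M D K g u s)))
      (Ioo ta tb) volume := by
    apply IntegrableOn.congr_fun _ hEq.symm measurableSet_Ioo
    exact hG.mono_set Ioo_subset_Icc_self
  have hIoc : IntegrableOn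
      (fun s => (forceResidual M D K g u s) ⬝ᵥ (M⁻¹.mulVec (forceResidual M D K g u s)))
      (Ioc ta tb) volume := hIoo.congr_set_ae MeasureTheory.Ioo_ae_eq_Ioc.symm
  exact (intervalIntegrable_iff_integrableOn_Ioc_of_le hab.le).mpr hIoc

/-- A minimizer of `E + E_C` over the admissible class has components
`ω_i(t) = φ_iᵀ M u(t)` satisfying the wiggly-spline ODE
`ω_i'''' + 2(λ_i − 2δ_i²) ω_i'' + λ_i (λ_i ω_i + g_i) = 0` on each open subinterval
`(t_{k−1}, t_k)`; equivalently `u(t) = ∑ i, ω_i(t) φ_i` with each `ω_i` a wiggly spline. -/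
theorem minimizer_is_wiggly_spline
    (n m : ℕ) (hn : 0 < n) (hm : 0 < m)
    (M K : Matrix (Fin n) (Fin n) ℝ) (hMsymm : M.IsSymm) (hKsymm : K.IsSymm)
    (hMpd : M.PosDef)
    (α β : ℝ) (D : Matrix (Fin n) (Fin n) ℝ) (hD : D = α • M + β • K)
    (g : Fin n → ℝ)
    (t : ℕ → ℝ) (ht : ∀ k < m, t k < t (k+1))
    (p q : ℕ → ℕ)
    (A : (k : ℕ) → Matrix (Fin (p k)) (Fin n) ℝ)
    (B : (k : ℕ) → Matrix (Fin (q k)) (Fin n) ℝ)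
    (a : (k : ℕ) → Fin (p k) → ℝ) (b : (k : ℕ) → Fin (q k) → ℝ)
    (cA cB : ℝ) (hcA : 0 ≤ cA) (hcB : 0 ≤ cB)
    (φ : Fin n → Fin n → ℝ) (lam : Fin n → ℝ)
    (hEig : ∀ i, K.mulVec (φ i) = lam i • M.mulVec (φ i))
    (hOrtho : ∀ i j, φ i ⬝ᵥ M.mulVec (φ j) = if i = j then (1:ℝ) else 0)
    (dl : Fin n → ℝ) (hdl : ∀ i, dl i = (α + β * lam i) / 2)
    (gc : Fin n → ℝ) (hgc : ∀ i, gc i = φ i ⬝ᵥ g)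
    (u : ℝ → Fin n → ℝ) (hu : Admissible m t u)
    (hmin : ∀ w : ℝ → Fin n → ℝ, Admissible m t w →
      elasticEnergy M D K g (t 0) (t m) u + constraintEnergy m t p q A B a b cA cB u ≤
      elasticEnergy M D K g (t 0) (t m) w + constraintEnergy m t p q A B a b cA cB w)
    (ω : Fin n → ℝ → ℝ) (hω : ∀ i s, ω i s = φ i ⬝ᵥ M.mulVec (u s)) :
    (∀ i : Fin n, ∀ k, 1 ≤ k → k ≤ m → ∀ s ∈ Ioo (t (k-1)) (t k),
      iteratedDeriv 4 (ω i) s + 2 * (lam i - 2 * (dl i)^2) * iteratedDeriv 2 (ω i) s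
        + lam i * (lam i * ω i s + gc i) = 0) ∧
    (∀ s ∈ Icc (t 0) (t m), u s = ∑ i, ω i s • φ i) := by
  have part2 : ∀ s ∈ Icc (t 0) (t m), u s = ∑ i, ω i s • φ i := by
    intro s _
    have h := ws_complete M φ hOrtho (u s)
    rw [← h]
    apply Finset.sum_congr rfl
    intro i _
    rw [hω]
  refine ⟨?_, part2⟩
  have hmono : ∀ l, l ≤ m → ∀ j, j ≤ l → t j ≤ t l := by
    intro l
    induction l with
    | zero =>
      intro _ j hj
      have hj0 : j = 0 := Nat.le_zero.mp hj
      rw [hj0]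
    | succ l ih =>
      intro hlm j hj
      rcases Nat.lt_or_ge j (l+1) with hlt | hge
      · exact le_trans (ih (by omega) j (by omega)) (ht l (by omega)).le
      · have hj1 : j = l + 1 := by omega
        rw [hj1]
  -- global integrability of the elastic integrand
  set Iu : ℝ → ℝ :=
    fun s => (forceResidual M D K g u s) ⬝ᵥ (M⁻¹.mulVec (forceResidual M D K g u s)) with hIudef
  have hIuPiece : ∀ j, 1 ≤ j → j ≤ m → IntervalIntegrable Iu volume (t (j-1)) (t j) := by
    intro j hj1 hjm
    have habj : t (j-1) < t j := by
      have h := ht (j-1) (by omega)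
      rwa [Nat.sub_add_cancel hj1] at h
    exact ws_Iu_integrable M D K g u _ _ habj (hu.2 j hj1 hjm)
  have hIuIntTot : IntervalIntegrable Iu volume (t 0) (t m) := by
    have chain : ∀ l, l ≤ m → IntervalIntegrable Iu volume (t 0) (t l) := by
      intro l
      induction l with
      | zero => intro _; exact IntervalIntegrable.refl
      | succ l ih =>
        intro hlm
        have h1 := ih (by omega)
        have h2 := hIuPiece (l+1) (by omega) hlm
        simp only [Nat.add_sub_cancel] at h2
        exact h1.trans h2
    exact chain m le_rfl
  intro i k hk1 hkm
  have hab : t (k-1) < t k := by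
    have h := ht (k-1) (by omega)
    rwa [Nat.sub_add_cancel hk1] at h
  set J : Set ℝ := Ioo (t (k-1)) (t k) with hJdef
  have hJopen : IsOpen J := isOpen_Ioo
  -- regularity of u on J
  have hu4 : ContDiffOn ℝ 4 u (Icc (t (k-1)) (t k)) := hu.2 k hk1 hkm
  have hu4J : ContDiffOn ℝ 4 u J := hu4.mono Ioo_subset_Icc_self
  have hu1J : ContDiffOn ℝ 3 (deriv u) J := hu4J.deriv_of_isOpen hJopen (by norm_num)
  have hDu : ∀ s ∈ J, HasDerivAt u (deriv u s) s := fun s hs =>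
    ((hu4J.differentiableOn (by norm_num)).differentiableAt (hJopen.mem_nhds hs)).hasDerivAt
  have hDu1 : ∀ s ∈ J, HasDerivAt (deriv u) (deriv (deriv u) s) s := fun s hs =>
    ((hu1J.differentiableOn (by norm_num)).differentiableAt (hJopen.mem_nhds hs)).hasDerivAt
  -- ω regularity on J
  have hωfun : ω i = fun s => φ i ⬝ᵥ M.mulVec (u s) := funext (hω i)
  have hω4 : ContDiffOn ℝ 4 (ω i) J := by
    rw [hωfun]; exact ws_contDiffOn_modal M (φ i) hu4J
  set w1 : ℝ → ℝ := deriv (ω i) with hw1def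
  set w2 : ℝ → ℝ := deriv w1 with hw2def
  set w3 : ℝ → ℝ := deriv w2 with hw3def
  set w4 : ℝ → ℝ := deriv w3 with hw4def
  have hω1 : ContDiffOn ℝ 3 w1 J := hω4.deriv_of_isOpen hJopen (by norm_num)
  have hω2 : ContDiffOn ℝ 2 w2 J := hω1.deriv_of_isOpen hJopen (by norm_num)
  have hω3 : ContDiffOn ℝ 1 w3 J := hω2.deriv_of_isOpen hJopen (by norm_num)
  have hDω0 : ∀ s ∈ J, HasDerivAt (ω i) (w1 s) s := fun s hs =>
    ((hω4.differentiableOn (by norm_num)).differentiableAt (hJopen.mem_nhds hs)).hasDerivAt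
  have hDω1 : ∀ s ∈ J, HasDerivAt w1 (w2 s) s := fun s hs =>
    ((hω1.differentiableOn (by norm_num)).differentiableAt (hJopen.mem_nhds hs)).hasDerivAt
  have hDω2 : ∀ s ∈ J, HasDerivAt w2 (w3 s) s := fun s hs =>
    ((hω2.differentiableOn (by norm_num)).differentiableAt (hJopen.mem_nhds hs)).hasDerivAt
  have hDω3 : ∀ s ∈ J, HasDerivAt w3 (w4 s) s := fun s hs =>
    ((hω3.differentiableOn (by norm_num)).differentiableAt (hJopen.mem_nhds hs)).hasDerivAt
  -- modal derivatives of u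
  have hω1u : ∀ s ∈ J, φ i ⬝ᵥ M.mulVec (deriv u s) = w1 s := by
    intro s hs
    have h := ws_hasDerivAt_modal M (φ i) (hDu s hs)
    rw [← hωfun] at h
    exact (h.deriv).symm
  have hω2u : ∀ s ∈ J, φ i ⬝ᵥ M.mulVec (deriv (deriv u) s) = w2 s := by
    intro s hs
    have hq : HasDerivAt (fun x => φ i ⬝ᵥ M.mulVec (deriv u x))
        (φ i ⬝ᵥ M.mulVec (deriv (deriv u) s)) s := ws_hasDerivAt_modal M (φ i) (hDu1 s hs)
    have hev : w1 =ᶠ[nhds s] (fun x => φ i ⬝ᵥ M.mulVec (deriv u x)) := by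
      filter_upwards [hJopen.mem_nhds hs] with y hy
      exact (hω1u y hy).symm
    have h2 : HasDerivAt w1 (φ i ⬝ᵥ M.mulVec (deriv (deriv u) s)) s :=
      hq.congr_of_eventuallyEq hev
    exact h2.deriv.symm
  -- the modal residual r
  set r : ℝ → ℝ := fun s => w2 s + 2 * dl i * w1 s + lam i * ω i s + gc i with hrdef
  have hr : ContDiffOn ℝ 2 r J := by
    apply ContDiffOn.add
    apply ContDiffOn.add
    apply ContDiffOn.add
    · exact hω2
    · exact contDiffOn_const.mul (hω1.of_le (by norm_num))
    · exact contDiffOn_const.mul (hω4.of_le (by norm_num))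
    · exact contDiffOn_const
  have hrcJ : ContinuousOn r J := hr.continuousOn
  -- the i-th modal component of the force residual equals r
  have hpi : ∀ s ∈ J, φ i ⬝ᵥ forceResidual M D K g u s = r s := by
    intro s hs
    unfold forceResidual
    rw [hD]
    rw [Matrix.add_mulVec, Matrix.smul_mulVec, Matrix.smul_mulVec]
    simp only [dotProduct_add, dotProduct_smul, smul_eq_mul]
    rw [ws_eigT M K hMsymm hKsymm (φ i) (lam i) (hEig i) (deriv u s)]
    rw [ws_eigT M K hMsymm hKsymm (φ i) (lam i) (hEig i) (u s)]
    rw [hω1u s hs, hω2u s hs, ← hω i s, ← hgc i, hrdef, hdl i]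
    ring
  -- variational identity
  have hH : ∀ c d : ℝ, t (k-1) < c → c < d → d < t k → ∀ η : ℝ → ℝ,
      ContDiff ℝ (↑(⊤:ℕ∞)) η → tsupport η ⊆ Ioo c d →
      (∫ s in c..d, r s * (deriv (deriv η) s + 2 * dl i * deriv η s + lam i * η s)) = 0 := by
    intro c d hac hcd hdb η hηsm hηsupp
    have hIccJ : Icc c d ⊆ J := fun x hx => ⟨lt_of_lt_of_le hac hx.1, lt_of_le_of_lt hx.2 hdb⟩
    have hIooJ : Ioo c d ⊆ J := subset_trans Ioo_subset_Icc_self hIccJ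
    have hsuppJ : tsupport η ⊆ J := subset_trans hηsupp hIooJ
    have hdiffη : Differentiable ℝ η := hηsm.differentiable (by simp)
    have hηd1 : ContDiff ℝ (↑(⊤:ℕ∞)) (deriv η) := (contDiff_infty_iff_deriv.mp hηsm).2
    have hdiffη1 : Differentiable ℝ (deriv η) := hηd1.differentiable (by simp)
    have hcη : Continuous η := hηsm.continuous
    have hcη1 : Continuous (deriv η) := hηd1.continuous
    have hcη2 : Continuous (deriv (deriv η)) := (contDiff_infty_iff_deriv.mp hηd1).2.continuous
    set Lf : ℝ → ℝ := fun s => deriv (deriv η) s + 2 * dl i * deriv η s + lam i * η s with hLdef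
    have hLc : Continuous Lf := by
      apply Continuous.add
      apply Continuous.add
      · exact hcη2
      · exact continuous_const.mul hcη1
      · exact continuous_const.mul hcη
    have key : ∀ ε : ℝ,
        0 ≤ ε * (∫ s in c..d, r s * Lf s) + ε^2 * ((1:ℝ)/2 * ∫ s in c..d, (Lf s)^2) := by
      intro ε
      set w : ℝ → Fin n → ℝ := fun s => u s + (ε * η s) • φ i with hwdef
      have hsm : ContDiff ℝ (↑(⊤:ℕ∞)) (fun s => (ε * η s) • φ i) :=
        (contDiff_const.mul hηsm).smul contDiff_const
      have hwadm : Admissible m t w := by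
        constructor
        · exact hu.1.add ((hsm.of_le (WithTop.coe_le_coe.mpr le_top)).contDiffOn)
        · intro j hj1 hjm
          exact (hu.2 j hj1 hjm).add
            ((hsm.of_le (WithTop.coe_le_coe.mpr le_top)).contDiffOn)
      have hwu : ∀ x, x ∉ tsupport η → w x = u x := by
        intro x hx
        rw [hwdef]
        simp [image_eq_zero_of_notMem_tsupport hx]
      have hwuev : ∀ x, x ∉ tsupport η → w =ᶠ[nhds x] u := by
        intro x hx
        filter_upwards [(isClosed_tsupport η).isOpen_compl.mem_nhds hx] with y hy
        exact hwu y hy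
      have hnode : ∀ j, j ≤ m → t j ∉ tsupport η := by
        intro j hjm hmem
        have hmemJ := hsuppJ hmem
        rcases le_or_gt j (k-1) with hle | hgt
        · exact absurd (hmono (k-1) (by omega) j hle) (not_le.mpr hmemJ.1)
        · have hkj : k ≤ j := by omega
          exact absurd (hmono j hjm k hkj) (not_le.mpr hmemJ.2)
      have hCons : constraintEnergy m t p q A B a b cA cB w
          = constraintEnergy m t p q A B a b cA cB u := by
        unfold constraintEnergy
        congr 1
        apply Finset.sum_congr rfl
        intro j hj
        have hjm : j ≤ m := by
          have := Finset.mem_range.mp hj; omega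
        have h1 : w (t j) = u (t j) := hwu _ (hnode j hjm)
        have h2 : derivWithin w (Icc (t 0) (t m)) (t j) = derivWithin u (Icc (t 0) (t m)) (t j) :=
          Filter.EventuallyEq.derivWithin_eq
            ((hwuev _ (hnode j hjm)).filter_mono nhdsWithin_le_nhds) h1
        rw [h1, h2]
      have hFoff : ∀ s, s ∉ tsupport η →
          forceResidual M D K g w s = forceResidual M D K g u s := by
        intro s hs
        have hopen := (isClosed_tsupport η).isOpen_compl
        have hev2 : deriv w =ᶠ[nhds s] deriv u := by
          filter_upwards [hopen.mem_nhds hs] with y hy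
          exact (hwuev y hy).deriv_eq
        unfold forceResidual
        rw [hwu s hs, (hwuev s hs).deriv_eq, hev2.deriv_eq]
      set Iw : ℝ → ℝ :=
        fun s => (forceResidual M D K g w s) ⬝ᵥ (M⁻¹.mulVec (forceResidual M D K g w s)) with hIwdef
      set hh : ℝ → ℝ := fun s => Iw s - Iu s with hhdef
      have hhJ : ∀ s ∈ J, hh s = 2*ε*(r s * Lf s) + ε^2*(Lf s)^2 := by
        intro s hs
        have hDw : HasDerivAt w (deriv u s + (ε * deriv η s) • φ i) s :=
          (hDu s hs).add (((hdiffη s).hasDerivAt.const_mul ε).smul_const (φ i))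
        have hwd1 : EqOn (deriv w) (fun x => deriv u x + (ε * deriv η x) • φ i) J := by
          intro x hx
          exact ((hDu x hx).add (((hdiffη x).hasDerivAt.const_mul ε).smul_const (φ i))).deriv
        have hDw1 : HasDerivAt (deriv w)
            (deriv (deriv u) s + (ε * deriv (deriv η) s) • φ i) s := by
          have hgood : HasDerivAt (fun x => deriv u x + (ε * deriv η x) • φ i)
              (deriv (deriv u) s + (ε * deriv (deriv η) s) • φ i) s :=
            (hDu1 s hs).add (((hdiffη1 s).hasDerivAt.const_mul ε).smul_const (φ i))
          apply hgood.congr_of_eventuallyEq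
          filter_upwards [hJopen.mem_nhds hs] with y hy
          exact hwd1 hy
        have hFw : ∀ jj : Fin n, φ jj ⬝ᵥ forceResidual M D K g w s
            = φ jj ⬝ᵥ forceResidual M D K g u s
              + ε * ((if jj = i then (1:ℝ) else 0) * Lf s) := by
          intro jj
          unfold forceResidual
          rw [hDw.deriv, hDw1.deriv]
          have hws : w s = u s + (ε * η s) • φ i := rfl
          rw [hws, hD]
          simp only [Matrix.mulVec_add, Matrix.mulVec_smul, Matrix.add_mulVec,
            Matrix.smul_mulVec, dotProduct_add, dotProduct_smul,
            smul_eq_mul, hEig i, hOrtho jj i]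
          rw [hLdef, hdl i]
          ring
        have hIwJ : Iw s = Iu s + (2*ε*(r s * Lf s) + ε^2*(Lf s)^2) := by
          rw [hIwdef, hIudef]
          simp only
          rw [ws_pair M hMpd φ hOrtho, ws_pair M hMpd φ hOrtho]
          have hsum : ∀ jj : Fin n,
              (φ jj ⬝ᵥ forceResidual M D K g w s) * (φ jj ⬝ᵥ forceResidual M D K g w s)
              = (φ jj ⬝ᵥ forceResidual M D K g u s) * (φ jj ⬝ᵥ forceResidual M D K g u s)
                + (if jj = i then 2*ε*((φ i ⬝ᵥ forceResidual M D K g u s) * Lf s)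
                    + ε^2*(Lf s)^2 else 0) := by
            intro jj
            rw [hFw jj]
            by_cases hji : jj = i
            · subst hji
              simp only [if_pos]
              ring
            · simp only [if_neg hji]
              ring
          simp_rw [hsum]
          rw [Finset.sum_add_distrib, Finset.sum_ite_eq' Finset.univ i, if_pos (Finset.mem_univ i)]
          rw [hpi s hs]
        rw [hhdef]
        simp only
        rw [hIwJ]
        ring
      have hhoff : ∀ s, s ∉ tsupport η → hh s = 0 := by
        intro s hs
        rw [hhdef]
        simp only [hIwdef, hIudef]
        rw [hFoff s hs]
        ring
      have hhcont : Continuous hh := by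
        rw [continuous_iff_continuousAt]
        intro x
        by_cases hx : x ∈ J
        · have hcJ : ContinuousOn hh J := by
            apply ContinuousOn.congr
              (f := fun s => 2*ε*(r s * Lf s) + ε^2*(Lf s)^2) _ (fun s hs => hhJ s hs)
            apply ContinuousOn.add
            · exact continuousOn_const.mul (hrcJ.mul hLc.continuousOn)
            · exact (continuous_const.mul (hLc.pow 2)).continuousOn
          exact hcJ.continuousAt (hJopen.mem_nhds hx)
        · have hxs : x ∉ tsupport η := fun hmem => hx (hsuppJ hmem)
          have hev : hh =ᶠ[nhds x] (fun _ => 0) := by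
            filter_upwards [(isClosed_tsupport η).isOpen_compl.mem_nhds hxs] with y hy
            exact hhoff y hy
          exact (continuousAt_congr hev).mpr continuousAt_const
      have hT0c : t 0 ≤ c := le_trans (hmono (k-1) (by omega) 0 (Nat.zero_le _)) hac.le
      have hdTm : d ≤ t m := le_trans hdb.le (hmono m le_rfl k hkm)
      have hIw_int : (∫ s in (t 0)..(t m), Iw s)
          = (∫ s in (t 0)..(t m), Iu s) + ∫ s in (t 0)..(t m), hh s := by
        have heq : Iw = fun s => Iu s + hh s := by
          funext s
          rw [hhdef]
          ring
        rw [heq]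
        exact intervalIntegral.integral_add hIuIntTot (hhcont.intervalIntegrable _ _)
      have hhsplit : (∫ s in (t 0)..(t m), hh s) = ∫ s in c..d, hh s := by
        have i1 : IntervalIntegrable hh volume (t 0) c := hhcont.intervalIntegrable _ _
        have i2 : IntervalIntegrable hh volume c d := hhcont.intervalIntegrable _ _
        have i3 : IntervalIntegrable hh volume d (t m) := hhcont.intervalIntegrable _ _
        rw [← intervalIntegral.integral_add_adjacent_intervals (i1.trans i2) i3,
          ← intervalIntegral.integral_add_adjacent_intervals i1 i2]
        have z1 : (∫ s in (t 0)..c, hh s) = 0 := by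
          rw [intervalIntegral.integral_congr (g := fun _ => (0:ℝ))
            (fun x hx => hhoff x (fun hmem => by
              rw [uIcc_of_le hT0c] at hx
              exact absurd (hηsupp hmem).1 (not_lt.mpr hx.2)))]
          simp
        have z3 : (∫ s in d..(t m), hh s) = 0 := by
          rw [intervalIntegral.integral_congr (g := fun _ => (0:ℝ))
            (fun x hx => hhoff x (fun hmem => by
              rw [uIcc_of_le hdTm] at hx
              exact absurd (hηsupp hmem).2 (not_lt.mpr hx.1)))]
          simp
        rw [z1, z3]
        ring
      have hcd_val : (∫ s in c..d, hh s)
          = 2*ε*(∫ s in c..d, r s * Lf s) + ε^2*(∫ s in c..d, (Lf s)^2) := by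
        have heqon : EqOn hh (fun s => 2*ε*(r s * Lf s) + ε^2*(Lf s)^2) (uIcc c d) := by
          intro x hx
          rw [uIcc_of_le hcd.le] at hx
          exact hhJ x (hIccJ hx)
        rw [intervalIntegral.integral_congr heqon]
        have hsubu : uIcc c d ⊆ J := by
          rw [uIcc_of_le hcd.le]; exact hIccJ
        have irf : IntervalIntegrable (fun s => 2*ε*(r s * Lf s)) volume c d :=
          (continuousOn_const.mul ((hrcJ.mono hsubu).mul hLc.continuousOn)).intervalIntegrable
        have irf2 : IntervalIntegrable (fun s => ε^2*(Lf s)^2) volume c d :=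
          (continuousOn_const.mul ((hLc.pow 2).continuousOn)).intervalIntegrable
        rw [intervalIntegral.integral_add irf irf2,
          intervalIntegral.integral_const_mul, intervalIntegral.integral_const_mul]
      have hEineq := hmin w hwadm
      rw [hCons] at hEineq
      have hEE : elasticEnergy M D K g (t 0) (t m) u ≤ elasticEnergy M D K g (t 0) (t m) w :=
        le_of_add_le_add_right hEineq
      unfold elasticEnergy at hEE
      rw [← hIudef, ← hIwdef] at hEE
      rw [hIw_int, hhsplit, hcd_val] at hEE
      nlinarith [hEE]
    have hA0 := ws_min_zero _ _ key
    exact hA0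
  have hmain := ws_dubois (t (k-1)) (t k) hab r (2 * dl i) (lam i) hr hH
  intro s₀ hs₀
  have hψ := hmain s₀ hs₀
  have hdr_eq : EqOn (deriv r) (fun s => w3 s + 2*dl i*w2 s + lam i*w1 s) J := by
    intro s hs
    have hDr : HasDerivAt r (w3 s + 2*dl i*w2 s + lam i*w1 s) s :=
      (((hDω2 s hs).add ((hDω1 s hs).const_mul (2*dl i))).add
        ((hDω0 s hs).const_mul (lam i))).add_const (gc i)
    exact hDr.deriv
  have e1 : deriv r s₀ = w3 s₀ + 2*dl i*w2 s₀ + lam i*w1 s₀ := hdr_eq hs₀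
  have e2 : deriv (deriv r) s₀ = w4 s₀ + 2*dl i*w3 s₀ + lam i*w2 s₀ := by
    have hDq : HasDerivAt (fun s => w3 s + 2*dl i*w2 s + lam i*w1 s)
        (w4 s₀ + 2*dl i*w3 s₀ + lam i*w2 s₀) s₀ :=
      ((hDω3 s₀ hs₀).add ((hDω2 s₀ hs₀).const_mul (2*dl i))).add
        ((hDω1 s₀ hs₀).const_mul (lam i))
    have hDr2 : HasDerivAt (deriv r) (w4 s₀ + 2*dl i*w3 s₀ + lam i*w2 s₀) s₀ := by
      apply hDq.congr_of_eventuallyEq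
      filter_upwards [hJopen.mem_nhds hs₀] with y hy
      exact hdr_eq hy
    exact hDr2.deriv
  have e4 : iteratedDeriv 4 (ω i) s₀ = w4 s₀ := by
    simp only [iteratedDeriv_succ, iteratedDeriv_zero, hw4def, hw3def, hw2def, hw1def]
  have e2' : iteratedDeriv 2 (ω i) s₀ = w2 s₀ := by
    simp only [iteratedDeriv_succ, iteratedDeriv_zero, hw2def, hw1def]
  have hrs : r s₀ = w2 s₀ + 2*dl i*w1 s₀ + lam i * ω i s₀ + gc i := rfl
  rw [e1, e2, hrs] at hψ
  rw [e4, e2']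
  linear_combination hψ
end

section
/- Let u be a minimizer of the functional 𝓔(u) = E(u) + E_C(u) over the admissible class 𝒜, and let t_k (0 < k < m) be an interior node at which no velocity constraint is imposed, i.e. the term c_B ‖B_k u̇(t_k) − b_k‖² is absent (B_k = 0 or its coefficient vanishes). Then u is twice differentiable at t_k; that is, for every i the one-sided second derivatives of ω_i(t) = φ_iᵀ M u(t) from the left interval [t_{k−1}, t_k] and from the right interval [t_k, t_{k+1}] agree at t_k. -/
open Matrix Set

open Filter MeasureTheory intervalIntegral

open scoped Interval

set_option maxHeartbeats 1600000

section AuxLemmas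

/-- If `0 ≤ ε L + ε² Q` for all real `ε`, then `L = 0`. -/
lemma first_variation_zero (L Q : ℝ) (h : ∀ ε : ℝ, 0 ≤ ε * L + ε^2 * Q) : L = 0 := by
  by_contra hL
  have hQ1 : 0 < |Q| + 1 := by positivity
  set s : ℝ := 1/(2*(|Q|+1)) with hs_def
  have hs : 0 < s := by positivity
  have hL2 : 0 < L^2 := by positivity
  have hQle : Q ≤ |Q| := le_abs_self Q
  have hQs : s * Q < 1 := by
    have h1 : s * Q ≤ s * |Q| := mul_le_mul_of_nonneg_left hQle hs.le
    have h2 : s * |Q| < 1 := by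
      rw [hs_def]
      rw [div_mul_eq_mul_div, one_mul, div_lt_one (by positivity)]
      linarith [abs_nonneg Q]
    linarith
  have h1 := h (-(L*s))
  nlinarith [mul_pos (mul_pos hL2 hs) (sub_pos.mpr hQs)]

/-- If `|x| ≤ C δ` for all small positive `δ`, then `x = 0`. -/
lemma eq_zero_of_abs_le_linear (x C δ₀ : ℝ) (hδ₀ : 0 < δ₀)
    (h : ∀ δ : ℝ, 0 < δ → δ < δ₀ → |x| ≤ C * δ) : x = 0 := by
  by_contra hx
  have hxpos : 0 < |x| := abs_pos.mpr hx
  have hC : 0 < C := by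
    by_contra hC
    push_neg at hC
    have h1 := h (δ₀/2) (by linarith) (by linarith)
    nlinarith
  have h1 : 0 < min (δ₀/2) (|x| / (2*C)) := lt_min (by linarith) (by positivity)
  have h2 : min (δ₀/2) (|x| / (2*C)) < δ₀ := lt_of_le_of_lt (min_le_left _ _) (by linarith)
  have h3 := h _ h1 h2
  have h4 : C * min (δ₀/2) (|x| / (2*C)) ≤ C * (|x|/(2*C)) :=
    mul_le_mul_of_nonneg_left (min_le_right _ _) hC.le
  have h5 : C * (|x|/(2*C)) = |x|/2 := by field_simp
  nlinarith

/-- A continuous function vanishing for `3 ≤ |x|` is globally bounded. -/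
lemma exists_bound_of_vanish {f : ℝ → ℝ} (hf : Continuous f)
    (h0 : ∀ x : ℝ, 3 ≤ |x| → f x = 0) : ∃ C : ℝ, 0 ≤ C ∧ ∀ x, |f x| ≤ C := by
  obtain ⟨C, hC⟩ := (isCompact_Icc (a := (-3:ℝ)) (b := 3)).exists_bound_of_continuousOn
    hf.continuousOn
  refine ⟨max C 0, le_max_right _ _, fun x => ?_⟩
  by_cases hx : |x| ≤ 3
  · have hmem : x ∈ Icc (-3:ℝ) 3 := by
      rw [mem_Icc]; constructor <;> [linarith [neg_abs_le x]; linarith [le_abs_self x] ]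
    exact le_trans (hC x hmem) (le_max_left _ _)
  · push_neg at hx
    rw [h0 x hx.le]
    simp

lemma myDerivWithin_clm {E F : Type*} [NormedAddCommGroup E] [NormedSpace ℝ E]
    [NormedAddCommGroup F] [NormedSpace ℝ F] (T : E →L[ℝ] F) {f : ℝ → E} {s : Set ℝ} {x : ℝ}
    (hf : DifferentiableWithinAt ℝ f s x) (hx : UniqueDiffWithinAt ℝ s x) :
    derivWithin (fun y => T (f y)) s x = T (derivWithin f s x) :=
  (T.hasFDerivAt.comp_hasDerivWithinAt x hf.hasDerivWithinAt).derivWithin hx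

/-- On the interior of `Icc A B`, a `C⁴` function and its derivative have genuine
derivatives given by `derivWithin`. -/
lemma hasDerivAt_of_contDiffOn_Icc {E : Type*} [NormedAddCommGroup E] [NormedSpace ℝ E]
    {f : ℝ → E} {A B : ℝ} (hf : ContDiffOn ℝ 4 f (Icc A B)) {s : ℝ} (hs : s ∈ Ioo A B) :
    HasDerivAt f (derivWithin f (Icc A B) s) s ∧
    HasDerivAt (deriv f) (derivWithin (derivWithin f (Icc A B)) (Icc A B) s) s := by
  have hAB : A < B := hs.1.trans hs.2
  have hU := uniqueDiffOn_Icc hAB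
  have hnh : Icc A B ∈ nhds s := Icc_mem_nhds hs.1 hs.2
  have h1 : ∀ y ∈ Ioo A B, HasDerivAt f (derivWithin f (Icc A B) y) y := by
    intro y hy
    exact ((hf.differentiableOn (by norm_num) y
      (Ioo_subset_Icc_self hy)).hasDerivWithinAt).hasDerivAt (Icc_mem_nhds hy.1 hy.2)
  refine ⟨h1 s hs, ?_⟩
  have hd1 : ContDiffOn ℝ 3 (derivWithin f (Icc A B)) (Icc A B) :=
    hf.derivWithin hU (by norm_num)
  have h2 : HasDerivAt (derivWithin f (Icc A B))
      (derivWithin (derivWithin f (Icc A B)) (Icc A B) s) s :=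
    ((hd1.differentiableOn (by norm_num) s
      (Ioo_subset_Icc_self hs)).hasDerivWithinAt).hasDerivAt hnh
  apply h2.congr_of_eventuallyEq
  filter_upwards [Ioo_mem_nhds hs.1 hs.2] with y hy
  exact (h1 y hy).deriv

/-- One-sided integration by parts. -/
lemma ibp_aux {a b : ℝ} (hab : a ≤ b) {R Q η' η'' : ℝ → ℝ}
    (hR : ContinuousOn R (Icc a b)) (hQ : ContinuousOn Q (Icc a b))
    (hRQ : ∀ x ∈ Ioo a b, HasDerivAt R (Q x) x)
    (hη'' : ∀ x, HasDerivAt η' (η'' x) x)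
    (hη'c : Continuous η') (hη''c : Continuous η'') :
    ∫ s in a..b, R s * η'' s = R b * η' b - R a * η' a - ∫ s in a..b, Q s * η' s := by
  have key : ∫ s in a..b, (Q s * η' s + R s * η'' s) = R b * η' b - R a * η' a := by
    apply integral_eq_sub_of_hasDeriv_right_of_le hab
    · exact hR.mul hη'c.continuousOn
    · intro x hx
      exact ((hRQ x hx).mul (hη'' x)).hasDerivWithinAt
    · apply ContinuousOn.intervalIntegrable
      rw [uIcc_of_le hab]
      exact (hQ.mul hη'c.continuousOn).add (hR.mul hη''c.continuousOn)
  have hQint : IntervalIntegrable (fun s => Q s * η' s) volume a b := by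
    apply ContinuousOn.intervalIntegrable
    rw [uIcc_of_le hab]
    exact hQ.mul hη'c.continuousOn
  have hRint : IntervalIntegrable (fun s => R s * η'' s) volume a b := by
    apply ContinuousOn.intervalIntegrable
    rw [uIcc_of_le hab]
    exact hR.mul hη''c.continuousOn
  rw [integral_add hQint hRint] at key
  linarith

lemma deriv_eq_zero_of_open {f : ℝ → ℝ} {U : Set ℝ} (hU : IsOpen U) (hf : ∀ y ∈ U, f y = 0) :
    ∀ x ∈ U, deriv f x = 0 := by
  intro x hx
  have h : f =ᶠ[nhds x] (fun _ => (0:ℝ)) := by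
    filter_upwards [hU.mem_nhds hx] with y hy using hf y hy
  rw [h.deriv_eq]
  simp

lemma continuousOn_dotmul {n : ℕ} {S : Set ℝ} {f h : ℝ → Fin n → ℝ}
    (hf : ContinuousOn f S) (hh : ContinuousOn h S) :
    ContinuousOn (fun s => f s ⬝ᵥ h s) S := by
  simp only [dotProduct]
  apply continuousOn_finset_sum
  intro j _
  exact ((continuous_apply j).comp_continuousOn hf).mul ((continuous_apply j).comp_continuousOn hh)

lemma continuousOn_mulVec {n : ℕ} {S : Set ℝ} (A : Matrix (Fin n) (Fin n) ℝ) {f : ℝ → Fin n → ℝ}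
    (hf : ContinuousOn f S) : ContinuousOn (fun s => A.mulVec (f s)) S := by
  have hc : Continuous (fun v : Fin n → ℝ => A.mulVec v) := by
    have := (LinearMap.toContinuousLinearMap (Matrix.mulVecLin A)).continuous
    exact this
  exact hc.comp_continuousOn hf

noncomputable def modalCLM {n : ℕ} (M : Matrix (Fin n) (Fin n) ℝ) (φ : Fin n → ℝ) :
    (Fin n → ℝ) →L[ℝ] ℝ :=
  LinearMap.toContinuousLinearMap
    { toFun := fun x => φ ⬝ᵥ M.mulVec x
      map_add' := fun x y => by simp [Matrix.mulVec_add, dotProduct_add]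
      map_smul' := fun c x => by simp [Matrix.mulVec_smul] }

@[simp] lemma modalCLM_apply {n : ℕ} (M : Matrix (Fin n) (Fin n) ℝ) (φ x : Fin n → ℝ) :
    modalCLM M φ x = φ ⬝ᵥ M.mulVec x := rfl

noncomputable def bumpζ : ContDiffBump (0:ℝ) := ⟨1, 2, one_pos, one_lt_two⟩

noncomputable def ρfun : ℝ → ℝ := fun x => x * bumpζ x

lemma ρfun_smooth : ContDiff ℝ (⊤:ℕ∞) ρfun := contDiff_id.mul bumpζ.contDiff

lemma ρfun_zero : ρfun 0 = 0 := by simp [ρfun]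

lemma ρfun_far : ∀ x : ℝ, 2 ≤ |x| → ρfun x = 0 := by
  intro x hx
  have : (bumpζ : ℝ → ℝ) x = 0 := bumpζ.zero_of_le_dist (by simpa [Real.dist_eq, bumpζ] using hx)
  simp [ρfun, this]

lemma ρfun_deriv_zero : deriv ρfun 0 = 1 := by
  have h : ρfun =ᶠ[nhds (0:ℝ)] fun x => x := by
    filter_upwards [bumpζ.eventuallyEq_one] with x hx
    simp [ρfun, hx]
  rw [h.deriv_eq]
  simp

lemma ρfun_deriv_far : ∀ x : ℝ, 2 < |x| → deriv ρfun x = 0 := by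
  have hU : IsOpen {y : ℝ | 2 < |y|} := isOpen_lt continuous_const continuous_abs
  exact fun x hx => deriv_eq_zero_of_open hU (fun y hy => ρfun_far y (le_of_lt hy)) x hx

lemma ρfun_deriv2_far : ∀ x : ℝ, 2 < |x| → deriv (deriv ρfun) x = 0 := by
  have hU : IsOpen {y : ℝ | 2 < |y|} := isOpen_lt continuous_const continuous_abs
  exact fun x hx => deriv_eq_zero_of_open hU (fun y hy => ρfun_deriv_far y hy) x hx

lemma ρfun_deriv_contDiff : ContDiff ℝ (⊤:ℕ∞) (deriv ρfun) :=
  (contDiff_infty_iff_deriv.mp ρfun_smooth).2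

lemma ρfun_deriv2_contDiff : ContDiff ℝ (⊤:ℕ∞) (deriv (deriv ρfun)) :=
  (contDiff_infty_iff_deriv.mp ρfun_deriv_contDiff).2

lemma abs_comb_le (x1 x2 x3 x4 : ℝ) : |x1 - x2 + x3 - x4| ≤ |x1| + |x2| + |x3| + |x4| := by
  calc |x1 - x2 + x3 - x4| ≤ |x1 - x2 + x3| + |x4| := abs_sub _ _
    _ ≤ (|x1 - x2| + |x3|) + |x4| := add_le_add_left (abs_add_le _ _) _
    _ ≤ ((|x1| + |x2|) + |x3|) + |x4| := by
        have h := abs_sub x1 x2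
        linarith
    _ = |x1| + |x2| + |x3| + |x4| := by ring

end AuxLemmas


/-- At an interior node `t_k` where no velocity constraint is imposed
(`B_k = 0` or `c_B = 0`), a minimizer of `E + E_C` is twice differentiable: for every `i`,
the one-sided second derivatives of `ω_i(t) = φ_iᵀ M u(t)` from `[t_{k−1}, t_k]` and from
`[t_k, t_{k+1}]` agree at `t_k`. -/
theorem minimizer_twice_differentiable_at_free_node
    (n m : ℕ) (hn : 0 < n) (hm : 0 < m)
    (M K : Matrix (Fin n) (Fin n) ℝ) (hMsymm : M.IsSymm) (hKsymm : K.IsSymm)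
    (hMpd : M.PosDef)
    (α β : ℝ) (D : Matrix (Fin n) (Fin n) ℝ) (hD : D = α • M + β • K)
    (g : Fin n → ℝ)
    (t : ℕ → ℝ) (ht : ∀ k < m, t k < t (k+1))
    (p q : ℕ → ℕ)
    (A : (k : ℕ) → Matrix (Fin (p k)) (Fin n) ℝ)
    (B : (k : ℕ) → Matrix (Fin (q k)) (Fin n) ℝ)
    (a : (k : ℕ) → Fin (p k) → ℝ) (b : (k : ℕ) → Fin (q k) → ℝ)
    (cA cB : ℝ) (hcA : 0 ≤ cA) (hcB : 0 ≤ cB)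
    (φ : Fin n → Fin n → ℝ) (lam : Fin n → ℝ)
    (hEig : ∀ i, K.mulVec (φ i) = lam i • M.mulVec (φ i))
    (hOrtho : ∀ i j, φ i ⬝ᵥ M.mulVec (φ j) = if i = j then (1:ℝ) else 0)
    (u : ℝ → Fin n → ℝ) (hu : Admissible m t u)
    (hmin : ∀ w : ℝ → Fin n → ℝ, Admissible m t w →
      elasticEnergy M D K g (t 0) (t m) u + constraintEnergy m t p q A B a b cA cB u ≤
      elasticEnergy M D K g (t 0) (t m) w + constraintEnergy m t p q A B a b cA cB w)
    (ω : Fin n → ℝ → ℝ) (hω : ∀ i s, ω i s = φ i ⬝ᵥ M.mulVec (u s))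
    (k : ℕ) (hk0 : 0 < k) (hkm : k < m)
    (hfree : B k = 0 ∨ cB = 0) :
    ∀ i : Fin n,
      iteratedDerivWithin 2 (ω i) (Icc (t (k-1)) (t k)) (t k) =
      iteratedDerivWithin 2 (ω i) (Icc (t k) (t (k+1))) (t k) := by
  intro i
  classical
  -- ### Ordering facts
  have hkm1 : (k-1) + 1 = k := by omega
  have hmono : ∀ a' b' : ℕ, a' ≤ b' → b' ≤ m → t a' ≤ t b' := by
    intro a' b' hab
    induction hab with
    | refl => intro _; exact le_rfl
    | @step b hb ih =>
      intro hbm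
      exact le_trans (ih (by omega)) (le_of_lt (ht b (by omega)))
  have haLτ : t (k-1) < t k := by
    have := ht (k-1) (by omega)
    rwa [hkm1] at this
  have hτbR : t k < t (k+1) := ht k hkm
  have ht0aL : t 0 ≤ t (k-1) := hmono 0 (k-1) (Nat.zero_le _) (by omega)
  have hbRtm : t (k+1) ≤ t m := hmono (k+1) m (by omega) le_rfl
  have ht0τ : t 0 < t k := lt_of_le_of_lt ht0aL haLτ
  have hτtm : t k < t m := lt_of_lt_of_le hτbR hbRtm
  have ht0tm : t 0 < t m := ht0τ.trans hτtm
  have hUB : UniqueDiffOn ℝ (Icc (t 0) (t m)) := uniqueDiffOn_Icc ht0tm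
  have hUL : UniqueDiffOn ℝ (Icc (t (k-1)) (t k)) := uniqueDiffOn_Icc haLτ
  have hUR : UniqueDiffOn ℝ (Icc (t k) (t (k+1))) := uniqueDiffOn_Icc hτbR
  have hτmemL : t k ∈ Icc (t (k-1)) (t k) := ⟨haLτ.le, le_rfl⟩
  have hτmemR : t k ∈ Icc (t k) (t (k+1)) := ⟨le_rfl, hτbR.le⟩
  -- ### Matrix and scalar algebra
  set T : (Fin n → ℝ) →L[ℝ] ℝ := modalCLM M (φ i) with hT_def
  have hTapp : ∀ x : Fin n → ℝ, T x = φ i ⬝ᵥ M.mulVec x := fun x => rfl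
  have hωT : ω i = fun s => T (u s) := funext fun s => by rw [hω i s, hTapp]
  have hMdet : IsUnit M.det := isUnit_iff_ne_zero.mpr (ne_of_gt hMpd.det_pos)
  have hMinv : M⁻¹ * M = 1 := Matrix.nonsing_inv_mul M hMdet
  have hMrec : ∀ v, M⁻¹.mulVec (M.mulVec v) = v := by
    intro v
    rw [Matrix.mulVec_mulVec, hMinv, Matrix.one_mulVec]
  have hMinvT : M⁻¹ᵀ = M⁻¹ := by
    rw [Matrix.transpose_nonsing_inv, hMsymm.eq]
  have hsymmdot : ∀ v w : Fin n → ℝ, v ⬝ᵥ M⁻¹.mulVec w = w ⬝ᵥ M⁻¹.mulVec v := by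
    intro v w
    rw [Matrix.dotProduct_mulVec v, ← Matrix.mulVec_transpose, hMinvT, dotProduct_comm]
  have hMφvec : M.mulVec (φ i) = Matrix.vecMul (φ i) M := by
    rw [← Matrix.mulVec_transpose, hMsymm.eq]
  have hφK : ∀ x : Fin n → ℝ, φ i ⬝ᵥ K.mulVec x = lam i * (φ i ⬝ᵥ M.mulVec x) := by
    intro x
    rw [Matrix.dotProduct_mulVec (φ i) K x, ← Matrix.mulVec_transpose, hKsymm.eq, hEig i,
      smul_dotProduct, hMφvec, Matrix.dotProduct_mulVec, smul_eq_mul]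
  have hφD : ∀ x : Fin n → ℝ, φ i ⬝ᵥ D.mulVec x = (α + β * lam i) * (φ i ⬝ᵥ M.mulVec x) := by
    intro x
    rw [hD, Matrix.add_mulVec, Matrix.smul_mulVec, Matrix.smul_mulVec,
      dotProduct_add, dotProduct_smul, dotProduct_smul, hφK,
      smul_eq_mul, smul_eq_mul]
    ring
  have hDφvec : D.mulVec (φ i) = (α + β * lam i) • M.mulVec (φ i) := by
    rw [hD, Matrix.add_mulVec, Matrix.smul_mulVec, Matrix.smul_mulVec, hEig i,
      smul_smul, ← add_smul]
  have hφMφ : φ i ⬝ᵥ M.mulVec (φ i) = 1 := by simpa using hOrtho i i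
  have hdotExp : ∀ (F : Fin n → ℝ) (x : ℝ),
      (F + x • M.mulVec (φ i)) ⬝ᵥ M⁻¹.mulVec (F + x • M.mulVec (φ i))
        = F ⬝ᵥ M⁻¹.mulVec F + 2*x*(φ i ⬝ᵥ F) + x^2 := by
    intro F x
    have e1 : M⁻¹.mulVec (x • M.mulVec (φ i)) = x • φ i := by
      rw [Matrix.mulVec_smul, hMrec]
    have e2 : (M.mulVec (φ i)) ⬝ᵥ (M⁻¹.mulVec F) = φ i ⬝ᵥ F := by
      rw [hsymmdot, hMrec, dotProduct_comm]
    have e3 : F ⬝ᵥ φ i = φ i ⬝ᵥ F := dotProduct_comm _ _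
    have e4 : M.mulVec (φ i) ⬝ᵥ φ i = 1 := by
      rw [dotProduct_comm]; exact hφMφ
    rw [Matrix.mulVec_add, e1, dotProduct_add, add_dotProduct,
      add_dotProduct, smul_dotProduct, smul_dotProduct,
      dotProduct_smul, dotProduct_smul, e2, e3, e4]
    simp only [smul_eq_mul]
    ring
  set c : ℝ := α + β * lam i with hc_def
  set γ : ℝ := φ i ⬝ᵥ g with hγ_def
  set r : ℝ → ℝ := fun s => φ i ⬝ᵥ forceResidual M D K g u s with hr_def
  set X : ℝ → ℝ :=
    fun s => forceResidual M D K g u s ⬝ᵥ M⁻¹.mulVec (forceResidual M D K g u s) with hX_def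
  -- ### per-interval regularity data
  have hgood : ∀ j, 1 ≤ j → j ≤ m → ∀ x ∈ Ioo (t (j-1)) (t j),
      HasDerivAt u (derivWithin u (Icc (t (j-1)) (t j)) x) x ∧
      HasDerivAt (deriv u)
        (derivWithin (derivWithin u (Icc (t (j-1)) (t j))) (Icc (t (j-1)) (t j)) x) x :=
    fun j hj1 hjm x hx => hasDerivAt_of_contDiffOn_Icc (hu.2 j hj1 hjm) hx
  -- ### integrability of the base elastic integrand
  have hXsub : ∀ j, 1 ≤ j → j ≤ m → IntervalIntegrable X volume (t (j-1)) (t j) := by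
    intro j hj1 hjm
    have hj0 : t (j-1) < t j := by
      have h' : j - 1 + 1 = j := by omega
      have := ht (j-1) (by omega)
      rwa [h'] at this
    have hu4 := hu.2 j hj1 hjm
    have hUj := uniqueDiffOn_Icc hj0
    set u1 := derivWithin u (Icc (t (j-1)) (t j)) with hu1_def
    set u2 := derivWithin u1 (Icc (t (j-1)) (t j)) with hu2_def
    have hu1c : ContDiffOn ℝ 3 u1 (Icc (t (j-1)) (t j)) := hu4.derivWithin hUj (by norm_num)
    have hu2c : ContDiffOn ℝ 2 u2 (Icc (t (j-1)) (t j)) := hu1c.derivWithin hUj (by norm_num)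
    set FC : ℝ → Fin n → ℝ :=
      fun s => M.mulVec (u2 s) + D.mulVec (u1 s) + K.mulVec (u s) + g with hFC_def
    have hFCc : ContinuousOn FC (Icc (t (j-1)) (t j)) :=
      (((continuousOn_mulVec M hu2c.continuousOn).add
        (continuousOn_mulVec D hu1c.continuousOn)).add
        (continuousOn_mulVec K hu4.continuousOn)).add continuousOn_const
    have hXCc : ContinuousOn (fun s => FC s ⬝ᵥ M⁻¹.mulVec (FC s)) (Icc (t (j-1)) (t j)) :=
      continuousOn_dotmul hFCc (continuousOn_mulVec M⁻¹ hFCc)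
    have hint : IntervalIntegrable (fun s => FC s ⬝ᵥ M⁻¹.mulVec (FC s)) volume (t (j-1)) (t j) := by
      apply ContinuousOn.intervalIntegrable
      rwa [uIcc_of_le hj0.le]
    apply hint.congr_ae
    have hne : ∀ᵐ x_ ∂volume, x_ ≠ t j := by
      have h0 : volume ({t j} : Set ℝ) = 0 := Real.volume_singleton
      have := (MeasureTheory.measure_eq_zero_iff_ae_notMem).mp h0
      filter_upwards [this] with x_ hx_ using hx_
    have hmem : ∀ᵐ x_ ∂(volume.restrict (Ι (t (j-1)) (t j))), x_ ∈ Ι (t (j-1)) (t j) :=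
      MeasureTheory.ae_restrict_mem measurableSet_uIoc
    filter_upwards [MeasureTheory.ae_mono MeasureTheory.Measure.restrict_le_self hne, hmem]
      with x_ hx1 hx2
    rw [uIoc_of_le hj0.le] at hx2
    have hxIoo : x_ ∈ Ioo (t (j-1)) (t j) := ⟨hx2.1, lt_of_le_of_ne hx2.2 hx1⟩
    obtain ⟨h1, h2⟩ := hgood j hj1 hjm x_ hxIoo
    show FC x_ ⬝ᵥ M⁻¹.mulVec (FC x_) = X x_
    rw [hX_def]
    simp only [forceResidual, h1.deriv, h2.deriv, hFC_def, hu1_def, hu2_def]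
  have hXint : IntervalIntegrable X volume (t 0) (t m) := by
    have main : ∀ N, N ≤ m → IntervalIntegrable X volume (t 0) (t N) := by
      intro N
      induction N with
      | zero => intro _; exact IntervalIntegrable.refl
      | succ N ih =>
        intro hNm
        have := hXsub (N+1) (by omega) hNm
        simp only [Nat.add_sub_cancel] at this
        exact (ih (by omega)).trans this
    exact main m le_rfl
  -- ### covering lemma
  have hcover : ∀ s_ : ℝ, t 0 < s_ → s_ ≤ t m →
      ∃ j, 1 ≤ j ∧ j ≤ m ∧ t (j-1) < s_ ∧ s_ ≤ t j := by
    intro s_ hs1 hs2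
    have main : ∀ N, N ≤ m → s_ ≤ t N → ∃ j, 1 ≤ j ∧ j ≤ m ∧ t (j-1) < s_ ∧ s_ ≤ t j := by
      intro N
      induction N with
      | zero => intro _ hle; exact absurd (lt_of_lt_of_le hs1 hle) (lt_irrefl _)
      | succ N ih =>
        intro hNm hle
        by_cases hc' : s_ ≤ t N
        · exact ih (by omega) hc'
        · push_neg at hc'
          exact ⟨N+1, by omega, hNm, by simpa using hc', hle⟩
    exact main m le_rfl hs2
  -- ### left and right interval data
  have hu4L : ContDiffOn ℝ 4 u (Icc (t (k-1)) (t k)) := hu.2 k hk0 hkm.le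
  have hu4R : ContDiffOn ℝ 4 u (Icc (t k) (t (k+1))) := by
    have := hu.2 (k+1) (by omega) (by omega)
    simpa using this
  set u1L := derivWithin u (Icc (t (k-1)) (t k)) with hu1L_def
  set u2L := derivWithin u1L (Icc (t (k-1)) (t k)) with hu2L_def
  set u3L := derivWithin u2L (Icc (t (k-1)) (t k)) with hu3L_def
  set u1R := derivWithin u (Icc (t k) (t (k+1))) with hu1R_def
  set u2R := derivWithin u1R (Icc (t k) (t (k+1))) with hu2R_def
  set u3R := derivWithin u2R (Icc (t k) (t (k+1))) with hu3R_def
  have hu1Lc : ContDiffOn ℝ 3 u1L (Icc (t (k-1)) (t k)) := hu4L.derivWithin hUL (by norm_num)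
  have hu2Lc : ContDiffOn ℝ 2 u2L (Icc (t (k-1)) (t k)) := hu1Lc.derivWithin hUL (by norm_num)
  have hu3Lc : ContDiffOn ℝ 1 u3L (Icc (t (k-1)) (t k)) := hu2Lc.derivWithin hUL (by norm_num)
  have hu1Rc : ContDiffOn ℝ 3 u1R (Icc (t k) (t (k+1))) := hu4R.derivWithin hUR (by norm_num)
  have hu2Rc : ContDiffOn ℝ 2 u2R (Icc (t k) (t (k+1))) := hu1Rc.derivWithin hUR (by norm_num)
  have hu3Rc : ContDiffOn ℝ 1 u3R (Icc (t k) (t (k+1))) := hu2Rc.derivWithin hUR (by norm_num)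
  set RL : ℝ → ℝ := fun s => T (u2L s) + c * T (u1L s) + lam i * T (u s) + γ with hRL_def
  set QL : ℝ → ℝ := fun s => T (u3L s) + c * T (u2L s) + lam i * T (u1L s) with hQL_def
  set RR : ℝ → ℝ := fun s => T (u2R s) + c * T (u1R s) + lam i * T (u s) + γ with hRR_def
  set QR : ℝ → ℝ := fun s => T (u3R s) + c * T (u2R s) + lam i * T (u1R s) with hQR_def
  have hRLc : ContinuousOn RL (Icc (t (k-1)) (t k)) :=
    (((T.continuous.comp_continuousOn hu2Lc.continuousOn).add
      ((T.continuous.comp_continuousOn hu1Lc.continuousOn).const_smul c)).add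
      ((T.continuous.comp_continuousOn hu4L.continuousOn).const_smul (lam i))).add
      continuousOn_const
  
  have hQLc : ContinuousOn QL (Icc (t (k-1)) (t k)) :=
    ((T.continuous.comp_continuousOn hu3Lc.continuousOn).add
      ((T.continuous.comp_continuousOn hu2Lc.continuousOn).const_smul c)).add
      ((T.continuous.comp_continuousOn hu1Lc.continuousOn).const_smul (lam i))
  have hRRc : ContinuousOn RR (Icc (t k) (t (k+1))) :=
    (((T.continuous.comp_continuousOn hu2Rc.continuousOn).add
      ((T.continuous.comp_continuousOn hu1Rc.continuousOn).const_smul c)).add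
      ((T.continuous.comp_continuousOn hu4R.continuousOn).const_smul (lam i))).add
      continuousOn_const
  have hQRc : ContinuousOn QR (Icc (t k) (t (k+1))) :=
    ((T.continuous.comp_continuousOn hu3Rc.continuousOn).add
      ((T.continuous.comp_continuousOn hu2Rc.continuousOn).const_smul c)).add
      ((T.continuous.comp_continuousOn hu1Rc.continuousOn).const_smul (lam i))
  -- derivative of RL on the interior
  have hRQL : ∀ x ∈ Ioo (t (k-1)) (t k), HasDerivAt RL (QL x) x := by
    intro x hx
    have hnh : Icc (t (k-1)) (t k) ∈ nhds x := Icc_mem_nhds hx.1 hx.2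
    have hxm := Ioo_subset_Icc_self hx
    have h2 : HasDerivAt u2L (u3L x) x :=
      ((hu2Lc.differentiableOn (by norm_num) x hxm).hasDerivWithinAt).hasDerivAt hnh
    have h1 : HasDerivAt u1L (u2L x) x :=
      ((hu1Lc.differentiableOn (by norm_num) x hxm).hasDerivWithinAt).hasDerivAt hnh
    have h0 : HasDerivAt u (u1L x) x :=
      ((hu4L.differentiableOn (by norm_num) x hxm).hasDerivWithinAt).hasDerivAt hnh
    have d2 : HasDerivAt (fun y => T (u2L y)) (T (u3L x)) x :=
      T.hasFDerivAt.comp_hasDerivAt x h2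
    have d1 : HasDerivAt (fun y => T (u1L y)) (T (u2L x)) x :=
      T.hasFDerivAt.comp_hasDerivAt x h1
    have d0 : HasDerivAt (fun y => T (u y)) (T (u1L x)) x :=
      T.hasFDerivAt.comp_hasDerivAt x h0
    exact ((d2.add ((d1.const_mul c))).add (d0.const_mul (lam i))).add_const γ
  have hRQR : ∀ x ∈ Ioo (t k) (t (k+1)), HasDerivAt RR (QR x) x := by
    intro x hx
    have hnh : Icc (t k) (t (k+1)) ∈ nhds x := Icc_mem_nhds hx.1 hx.2
    have hxm := Ioo_subset_Icc_self hx
    have h2 : HasDerivAt u2R (u3R x) x :=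
      ((hu2Rc.differentiableOn (by norm_num) x hxm).hasDerivWithinAt).hasDerivAt hnh
    have h1 : HasDerivAt u1R (u2R x) x :=
      ((hu1Rc.differentiableOn (by norm_num) x hxm).hasDerivWithinAt).hasDerivAt hnh
    have h0 : HasDerivAt u (u1R x) x :=
      ((hu4R.differentiableOn (by norm_num) x hxm).hasDerivWithinAt).hasDerivAt hnh
    have d2 : HasDerivAt (fun y => T (u2R y)) (T (u3R x)) x :=
      T.hasFDerivAt.comp_hasDerivAt x h2
    have d1 : HasDerivAt (fun y => T (u1R y)) (T (u2R x)) x :=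
      T.hasFDerivAt.comp_hasDerivAt x h1
    have d0 : HasDerivAt (fun y => T (u y)) (T (u1R x)) x :=
      T.hasFDerivAt.comp_hasDerivAt x h0
    exact ((d2.add ((d1.const_mul c))).add (d0.const_mul (lam i))).add_const γ
  -- identification of the force residual with R on the interiors
  have hrLIoo : ∀ x ∈ Ioo (t (k-1)) (t k), r x = RL x := by
    intro x hx
    obtain ⟨h1, h2⟩ := hasDerivAt_of_contDiffOn_Icc hu4L hx
    rw [hr_def, hRL_def]
    simp only [forceResidual, h1.deriv, h2.deriv, dotProduct_add, hTapp, hφD, hφK,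
      hc_def, hγ_def, ← hu1L_def, ← hu2L_def]
  have hrRIoo : ∀ x ∈ Ioo (t k) (t (k+1)), r x = RR x := by
    intro x hx
    obtain ⟨h1, h2⟩ := hasDerivAt_of_contDiffOn_Icc hu4R hx
    rw [hr_def, hRR_def]
    simp only [forceResidual, h1.deriv, h2.deriv, dotProduct_add, hTapp, hφD, hφK,
      hc_def, hγ_def, ← hu1R_def, ← hu2R_def]
  -- second derivative of ω equals T(u2) at the node
  have hd2L : iteratedDerivWithin 2 (ω i) (Icc (t (k-1)) (t k)) (t k) = T (u2L (t k)) := by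
    rw [iteratedDerivWithin_succ]
    have h1 : Set.EqOn (iteratedDerivWithin 1 (ω i) (Icc (t (k-1)) (t k)))
        (fun y => T (u1L y)) (Icc (t (k-1)) (t k)) := by
      intro y hy
      rw [iteratedDerivWithin_one, hωT]
      exact myDerivWithin_clm T (hu4L.differentiableOn (by norm_num) y hy) (hUL _ hy)
    rw [derivWithin_congr h1 (h1 hτmemL)]
    exact myDerivWithin_clm T (hu1Lc.differentiableOn (by norm_num) _ hτmemL) (hUL _ hτmemL)
  have hd2R : iteratedDerivWithin 2 (ω i) (Icc (t k) (t (k+1))) (t k) = T (u2R (t k)) := by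
    rw [iteratedDerivWithin_succ]
    have h1 : Set.EqOn (iteratedDerivWithin 1 (ω i) (Icc (t k) (t (k+1))))
        (fun y => T (u1R y)) (Icc (t k) (t (k+1))) := by
      intro y hy
      rw [iteratedDerivWithin_one, hωT]
      exact myDerivWithin_clm T (hu4R.differentiableOn (by norm_num) y hy) (hUR _ hy)
    rw [derivWithin_congr h1 (h1 hτmemR)]
    exact myDerivWithin_clm T (hu1Rc.differentiableOn (by norm_num) _ hτmemR) (hUR _ hτmemR)
  -- first derivatives match at the node (u is C¹ globally)
  have hu1τ : u1L (t k) = u1R (t k) := by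
    have hudiffB : DifferentiableWithinAt ℝ u (Icc (t 0) (t m)) (t k) :=
      (hu.1.differentiableOn one_ne_zero) (t k) ⟨ht0τ.le, hτtm.le⟩
    have hBW := hudiffB.hasDerivWithinAt
    have hLe : u1L (t k) = derivWithin u (Icc (t 0) (t m)) (t k) :=
      (hBW.mono (Icc_subset_Icc ht0aL hτtm.le)).derivWithin (hUL _ hτmemL)
    have hRe : u1R (t k) = derivWithin u (Icc (t 0) (t m)) (t k) :=
      (hBW.mono (Icc_subset_Icc ht0τ.le hbRtm)).derivWithin (hUR _ hτmemR)
    rw [hLe, hRe]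
  
  -- ### bounds
  obtain ⟨BRL, hBRL⟩ := isCompact_Icc.exists_bound_of_continuousOn hRLc
  obtain ⟨BQL, hBQL⟩ := isCompact_Icc.exists_bound_of_continuousOn hQLc
  obtain ⟨BRR, hBRR⟩ := isCompact_Icc.exists_bound_of_continuousOn hRRc
  obtain ⟨BQR, hBQR⟩ := isCompact_Icc.exists_bound_of_continuousOn hQRc
  have hBRLnn : 0 ≤ BRL := le_trans (norm_nonneg _) (hBRL _ hτmemL)
  have hBQLnn : 0 ≤ BQL := le_trans (norm_nonneg _) (hBQL _ hτmemL)
  have hBRRnn : 0 ≤ BRR := le_trans (norm_nonneg _) (hBRR _ hτmemR)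
  have hBQRnn : 0 ≤ BQR := le_trans (norm_nonneg _) (hBQR _ hτmemR)
  obtain ⟨Bρ, hBρnn, hBρ⟩ := exists_bound_of_vanish ρfun_smooth.continuous
    (fun x hx => ρfun_far x (by linarith))
  obtain ⟨Bρ', hBρ'nn, hBρ'⟩ := exists_bound_of_vanish ρfun_deriv_contDiff.continuous
    (fun x hx => ρfun_deriv_far x (by linarith))
  -- ### scale
  set δ₀ : ℝ := min (t k - t (k-1)) (t (k+1) - t k) / 3 with hδ₀_def
  have hδ₀pos : 0 < δ₀ := by
    rw [hδ₀_def]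
    apply div_pos (lt_min (by linarith) (by linarith)) (by norm_num)
  have h3δ₀L : 3 * δ₀ ≤ t k - t (k-1) := by
    have h1 := min_le_left (t k - t (k-1)) (t (k+1) - t k)
    rw [hδ₀_def]
    linarith
  have h3δ₀R : 3 * δ₀ ≤ t (k+1) - t k := by
    have h1 := min_le_right (t k - t (k-1)) (t (k+1) - t k)
    rw [hδ₀_def]
    linarith
  set CE : ℝ := 3*(BQL*Bρ' + ( |c| * Bρ' + |lam i| * (δ₀*Bρ))*BRL)
      + 3*(BQR*Bρ' + ( |c| * Bρ' + |lam i| * (δ₀*Bρ))*BRR) with hCE_def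
  -- ### main interface identity
  have hmain : RL (t k) = RR (t k) := by
    have h0 : RL (t k) - RR (t k) = 0 := by
      apply eq_zero_of_abs_le_linear _ CE δ₀ hδ₀pos
      intro δ hδpos hδlt
      set τ := t k with hτ_def
      have hδne : δ ≠ 0 := ne_of_gt hδpos
      -- #### the bump variation
      set η : ℝ → ℝ := fun s => δ * ρfun ((s - τ)/δ) with hη_def
      set η' : ℝ → ℝ := fun s => deriv ρfun ((s - τ)/δ) with hη'_def
      set η'' : ℝ → ℝ := fun s => deriv (deriv ρfun) ((s - τ)/δ) * (1/δ) with hη''_def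
      have hgder : ∀ x : ℝ, HasDerivAt (fun s => (s - τ)/δ) (1/δ) x := fun x =>
        ((hasDerivAt_id x).sub_const τ).div_const δ
      have hηd : ∀ x, HasDerivAt η (η' x) x := by
        intro x
        have hρ : HasDerivAt ρfun (deriv ρfun ((x - τ)/δ)) ((x - τ)/δ) :=
          (ρfun_smooth.differentiable (by simp)).differentiableAt.hasDerivAt
        have h1 := (hρ.comp x (hgder x)).const_mul δ
        have h2 : δ * (deriv ρfun ((x - τ)/δ) * (1/δ)) = η' x := by
          rw [hη'_def]
          field_simp
        rw [← h2]
        exact h1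
      have hηd2 : ∀ x, HasDerivAt η' (η'' x) x := by
        intro x
        have hρ2 : HasDerivAt (deriv ρfun) (deriv (deriv ρfun) ((x - τ)/δ)) ((x - τ)/δ) :=
          (ρfun_deriv_contDiff.differentiable (by simp)).differentiableAt.hasDerivAt
        have h1 := hρ2.comp x (hgder x)
        rw [hη''_def]
        exact h1
      have hητ : η τ = 0 := by
        rw [hη_def]
        simp [ρfun_zero]
      have hη'τ : η' τ = 1 := by
        rw [hη'_def]
        simp [ρfun_deriv_zero]
      have hηfar : ∀ s_ : ℝ, 2*δ ≤ |s_ - τ| → η s_ = 0 := by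
        intro s_ hs
        have harg : 2 ≤ |(s_ - τ)/δ| := by
          rw [abs_div, abs_of_pos hδpos, le_div_iff₀ hδpos]
          linarith only [hs]
        rw [hη_def]
        simp [ρfun_far _ harg]
      have hη'far : ∀ s_ : ℝ, 2*δ < |s_ - τ| → η' s_ = 0 := by
        intro s_ hs
        have harg : 2 < |(s_ - τ)/δ| := by
          rw [abs_div, abs_of_pos hδpos, lt_div_iff₀ hδpos]
          linarith only [hs]
        rw [hη'_def]
        exact ρfun_deriv_far _ harg
      have hη''far : ∀ s_ : ℝ, 2*δ < |s_ - τ| → η'' s_ = 0 := by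
        intro s_ hs
        have harg : 2 < |(s_ - τ)/δ| := by
          rw [abs_div, abs_of_pos hδpos, lt_div_iff₀ hδpos]
          linarith only [hs]
        rw [hη''_def]
        simp [ρfun_deriv2_far _ harg]
      have hgc : Continuous (fun s : ℝ => (s - τ)/δ) :=
        (continuous_id.sub continuous_const).div_const δ
      have hηc : Continuous η := by
        rw [hη_def]
        exact continuous_const.mul (ρfun_smooth.continuous.comp hgc)
      have hη'c : Continuous η' := by
        rw [hη'_def]
        exact ρfun_deriv_contDiff.continuous.comp hgc
      have hη''c : Continuous η'' := by
        rw [hη''_def]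
        exact (ρfun_deriv2_contDiff.continuous.comp hgc).mul continuous_const
      have hηbd : ∀ s_ : ℝ, |η s_| ≤ δ * Bρ := by
        intro s_
        rw [hη_def]
        show |δ * ρfun ((s_ - τ)/δ)| ≤ δ * Bρ
        rw [abs_mul, abs_of_pos hδpos]
        exact mul_le_mul_of_nonneg_left (hBρ _) hδpos.le
      have hη'bd : ∀ s_ : ℝ, |η' s_| ≤ Bρ' := by
        intro s_
        rw [hη'_def]
        exact hBρ' _
      set ψ : ℝ → ℝ := fun s => η'' s + c * η' s + lam i * η s with hψ_def
      have hψc : Continuous ψ := by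
        rw [hψ_def]
        exact (hη''c.add (continuous_const.mul hη'c)).add (continuous_const.mul hηc)
      have hψfar : ∀ s_ : ℝ, 2*δ < |s_ - τ| → ψ s_ = 0 := by
        intro s_ hs
        rw [hψ_def]
        simp [hη''far s_ hs, hη'far s_ hs, hηfar s_ (le_of_lt hs)]
      have hηsm : ContDiff ℝ (⊤:ℕ∞) η := by
        rw [hη_def]
        exact contDiff_const.mul
          (ρfun_smooth.comp ((contDiff_id.sub contDiff_const).div_const δ))
      -- #### admissibility of the variation
      have hvsm : ∀ ε : ℝ, ContDiff ℝ (⊤:ℕ∞) (fun s => (ε * η s) • φ i) := fun ε =>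
        (contDiff_const.mul hηsm).smul contDiff_const
      have hwAdm : ∀ ε : ℝ, Admissible m t (fun s => u s + (ε * η s) • φ i) := by
        intro ε
        constructor
        · exact hu.1.add ((hvsm ε).of_le (WithTop.coe_le_coe.mpr le_top)).contDiffOn
        · intro j hj1 hjm
          exact (hu.2 j hj1 hjm).add
            ((hvsm ε).of_le (WithTop.coe_le_coe.mpr le_top)).contDiffOn
      -- #### the constraint energy does not change
      have hCons : ∀ ε : ℝ,
          constraintEnergy m t p q A B a b cA cB (fun s => u s + (ε * η s) • φ i)
            = constraintEnergy m t p q A B a b cA cB u := by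
        intro ε
        rw [constraintEnergy, constraintEnergy]
        congr 1
        apply Finset.sum_congr rfl
        intro j hj
        have hjm : j ≤ m := by
          have := Finset.mem_range.mp hj
          omega
        have hηtj : η (t j) = 0 := by
          rcases eq_or_ne j k with hjk | hjk
          · rw [hjk, ← hτ_def]
            exact hητ
          · apply hηfar
            rcases lt_or_gt_of_ne hjk with h | h
            · have h1 : t j ≤ t (k-1) := hmono j (k-1) (by omega) (by omega)
              have h2 : 2*δ ≤ τ - t j := by
                rw [hτ_def]
                linarith only [h1, h3δ₀L, hδlt, hδ₀pos, hδpos]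
              exact le_trans h2 (by rw [abs_sub_comm]; exact le_abs_self _)
            · have h1 : t (k+1) ≤ t j := hmono (k+1) j (by omega) (by omega)
              have h2 : 2*δ ≤ t j - τ := by
                rw [hτ_def]
                linarith only [h1, h3δ₀R, hδlt, hδ₀pos, hδpos]
              exact le_trans h2 (le_abs_self _)
        have hwA : u (t j) + (ε * η (t j)) • φ i = u (t j) := by
          rw [hηtj]
          simp
        rcases eq_or_ne j k with hjk | hjk
        · subst hjk
          rcases hfree with hB | hcB0
          · rw [hB]
            simp only [Matrix.zero_mulVec, hwA]
          · rw [hcB0]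
            simp only [hwA, zero_mul]
        · have hη'tj : η' (t j) = 0 := by
            apply hη'far
            rcases lt_or_gt_of_ne hjk with h | h
            · have h1 : t j ≤ t (k-1) := hmono j (k-1) (by omega) (by omega)
              have h2 : 2*δ < τ - t j := by
                rw [hτ_def]
                linarith only [h1, h3δ₀L, hδlt, hδ₀pos, hδpos]
              exact lt_of_lt_of_le h2 (by rw [abs_sub_comm]; exact le_abs_self _)
            · have h1 : t (k+1) ≤ t j := hmono (k+1) j (by omega) (by omega)
              have h2 : 2*δ < t j - τ := by
                rw [hτ_def]
                linarith only [h1, h3δ₀R, hδlt, hδ₀pos, hδpos]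
              exact lt_of_lt_of_le h2 (le_abs_self _)
          have htjmem : t j ∈ Icc (t 0) (t m) :=
            ⟨hmono 0 j (Nat.zero_le _) hjm, hmono j m hjm le_rfl⟩
          have hud : HasDerivWithinAt u (derivWithin u (Icc (t 0) (t m)) (t j))
              (Icc (t 0) (t m)) (t j) :=
            ((hu.1.differentiableOn one_ne_zero) _ htjmem).hasDerivWithinAt
          have hvd : HasDerivAt (fun s => (ε * η s) • φ i) ((ε * η' (t j)) • φ i) (t j) :=
            ((hηd (t j)).const_mul ε).smul_const (φ i)
          have hder := (hud.add (hvd.hasDerivWithinAt)).derivWithin (hUB _ htjmem)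
          rw [hη'tj] at hder
          simp only [mul_zero, zero_smul, add_zero] at hder
          rw [hwA, show (fun s => u s + (ε * η s) • φ i) = u + fun s => (ε * η s) • φ i from rfl,
            hder]
      -- #### pieces of Y
      set Y : ℝ → ℝ := fun s => ψ s * r s with hY_def
      set aδ : ℝ := τ - 3*δ with haδ_def
      set bδ : ℝ := τ + 3*δ with hbδ_def
      have haLaδ : t (k-1) ≤ aδ := by
        rw [haδ_def, hτ_def]
        linarith only [h3δ₀L, hδlt, hδ₀pos]
      have haδτ : aδ < τ := by
        rw [haδ_def]
        linarith only [hδpos]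
      have hτbδ : τ < bδ := by
        rw [hbδ_def]
        linarith only [hδpos]
      have hbδbR : bδ ≤ t (k+1) := by
        rw [hbδ_def, hτ_def]
        linarith only [h3δ₀R, hδlt, hδ₀pos]
      have ht0aδ : t 0 ≤ aδ := le_trans ht0aL haLaδ
      have hbδtm : bδ ≤ t m := le_trans hbδbR hbRtm
      have hYzeroL : ∀ x ∈ Icc (t 0) aδ, Y x = 0 := by
        intro x hx
        have h2 : 2*δ < |x - τ| := by
          have h3 : 2*δ < τ - x := by
            have h4 := hx.2
            rw [haδ_def] at h4
            linarith only [h4, hδpos]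
          exact lt_of_lt_of_le h3 (by rw [abs_sub_comm]; exact le_abs_self _)
        rw [hY_def]
        show ψ x * r x = 0
        rw [hψfar x h2, zero_mul]
      have hYzeroR : ∀ x ∈ Icc bδ (t m), Y x = 0 := by
        intro x hx
        have h2 : 2*δ < |x - τ| := by
          have h3 : 2*δ < x - τ := by
            have h4 := hx.1
            rw [hbδ_def] at h4
            linarith only [h4, hδpos]
          exact lt_of_lt_of_le h3 (le_abs_self _)
        rw [hY_def]
        show ψ x * r x = 0
        rw [hψfar x h2, zero_mul]
      have hY1int : IntervalIntegrable Y volume (t 0) aδ := by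
        apply (_root_.intervalIntegrable_const (c := (0:ℝ))).congr_ae
        have hmem : ∀ᵐ x ∂(volume.restrict (Ι (t 0) aδ)), x ∈ Ι (t 0) aδ :=
          MeasureTheory.ae_restrict_mem measurableSet_uIoc
        filter_upwards [hmem] with x hx
        rw [uIoc_of_le ht0aδ] at hx
        exact (hYzeroL x ⟨hx.1.le, hx.2⟩).symm
      have hY4int : IntervalIntegrable Y volume bδ (t m) := by
        apply (_root_.intervalIntegrable_const (c := (0:ℝ))).congr_ae
        have hmem : ∀ᵐ x ∂(volume.restrict (Ι bδ (t m))), x ∈ Ι bδ (t m) :=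
          MeasureTheory.ae_restrict_mem measurableSet_uIoc
        filter_upwards [hmem] with x hx
        rw [uIoc_of_le hbδtm] at hx
        exact (hYzeroR x ⟨hx.1.le, hx.2⟩).symm
      have hY1val : ∫ s in (t 0)..aδ, Y s = 0 := by
        rw [intervalIntegral.integral_congr (g := fun _ => (0:ℝ))]
        · simp
        · intro x hx
          rw [uIcc_of_le ht0aδ] at hx
          exact hYzeroL x hx
      have hY4val : ∫ s in bδ..(t m), Y s = 0 := by
        rw [intervalIntegral.integral_congr (g := fun _ => (0:ℝ))]
        · simp
        · intro x hx
          rw [uIcc_of_le hbδtm] at hx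
          exact hYzeroR x hx
      have hIccL2 : Icc aδ τ ⊆ Icc (t (k-1)) τ := Icc_subset_Icc haLaδ le_rfl
      have hIooL2 : Ioo aδ τ ⊆ Ioo (t (k-1)) τ := Ioo_subset_Ioo haLaδ le_rfl
      have hIccR2 : Icc τ bδ ⊆ Icc τ (t (k+1)) := Icc_subset_Icc le_rfl hbδbR
      have hIooR2 : Ioo τ bδ ⊆ Ioo τ (t (k+1)) := Ioo_subset_Ioo le_rfl hbδbR
      have hneτ : ∀ᵐ x ∂(volume : Measure ℝ), x ≠ τ := by
        have h0 : volume ({τ} : Set ℝ) = 0 := Real.volume_singleton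
        have := (MeasureTheory.measure_eq_zero_iff_ae_notMem).mp h0
        filter_upwards [this] with x_ hx_ using hx_
      have hYRLae : ∀ᵐ x ∂(volume : Measure ℝ), x ∈ Ι aδ τ → Y x = ψ x * RL x := by
        filter_upwards [hneτ] with x h1 h2
        rw [uIoc_of_le haδτ.le] at h2
        have hxIoo : x ∈ Ioo (t (k-1)) τ := hIooL2 ⟨h2.1, lt_of_le_of_ne h2.2 h1⟩
        rw [hY_def]
        show ψ x * r x = ψ x * RL x
        rw [hrLIoo x hxIoo]
      have hYRRae : ∀ᵐ x ∂(volume : Measure ℝ), x ∈ Ι τ bδ → Y x = ψ x * RR x := by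
        have hneτ' : ∀ᵐ x ∂(volume : Measure ℝ), x ≠ bδ := by
          have h0 : volume ({bδ} : Set ℝ) = 0 := Real.volume_singleton
          have := (MeasureTheory.measure_eq_zero_iff_ae_notMem).mp h0
          filter_upwards [this] with x_ hx_ using hx_
        filter_upwards [hneτ'] with x h1 h2
        rw [uIoc_of_le hτbδ.le] at h2
        have hxIoo : x ∈ Ioo τ (t (k+1)) := hIooR2 ⟨h2.1, lt_of_le_of_ne h2.2 h1⟩
        rw [hY_def]
        show ψ x * r x = ψ x * RR x
        rw [hrRIoo x hxIoo]
      have hψRLc : ContinuousOn (fun s => ψ s * RL s) (Icc aδ τ) :=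
        hψc.continuousOn.mul (hRLc.mono hIccL2)
      have hψRRc : ContinuousOn (fun s => ψ s * RR s) (Icc τ bδ) :=
        hψc.continuousOn.mul (hRRc.mono hIccR2)
      have hY2int : IntervalIntegrable Y volume aδ τ := by
        apply IntervalIntegrable.congr_ae (f := fun s => ψ s * RL s)
        · apply ContinuousOn.intervalIntegrable
          rwa [uIcc_of_le haδτ.le]
        · have := (MeasureTheory.ae_restrict_iff' measurableSet_uIoc).mpr hYRLae
          filter_upwards [this] with x hx using hx.symm
      have hY3int : IntervalIntegrable Y volume τ bδ := by
        apply IntervalIntegrable.congr_ae (f := fun s => ψ s * RR s)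
        · apply ContinuousOn.intervalIntegrable
          rwa [uIcc_of_le hτbδ.le]
        · have := (MeasureTheory.ae_restrict_iff' measurableSet_uIoc).mpr hYRRae
          filter_upwards [this] with x hx using hx.symm
      have hY2val : ∫ s in aδ..τ, Y s = ∫ s in aδ..τ, ψ s * RL s :=
        intervalIntegral.integral_congr_ae hYRLae
      have hY3val : ∫ s in τ..bδ, Y s = ∫ s in τ..bδ, ψ s * RR s :=
        intervalIntegral.integral_congr_ae hYRRae
      have hYint : IntervalIntegrable Y volume (t 0) (t m) :=
        (hY1int.trans hY2int).trans (hY3int.trans hY4int)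
      -- #### energy expansion
      have hIψsq : IntervalIntegrable (fun s => (ψ s)^2) volume (t 0) (t m) :=
        (hψc.pow 2).intervalIntegrable _ _
      have hEnergy : ∀ ε : ℝ,
          elasticEnergy M D K g (t 0) (t m) (fun s => u s + (ε * η s) • φ i)
            = elasticEnergy M D K g (t 0) (t m) u
              + ε * (∫ s in (t 0)..(t m), Y s)
              + ε^2 * ((∫ s in (t 0)..(t m), (ψ s)^2)/2) := by
        intro ε
        have hae : ∀ᵐ x ∂(volume : Measure ℝ), x ∈ Ι (t 0) (t m) →
            (forceResidual M D K g (fun s => u s + (ε * η s) • φ i) x ⬝ᵥ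
              M⁻¹.mulVec (forceResidual M D K g (fun s => u s + (ε * η s) • φ i) x))
            = X x + (2*ε) * Y x + ε^2 * (ψ x)^2 := by
          have hnodes : ∀ᵐ x ∂(volume : Measure ℝ),
              x ∉ (⋃ j ∈ Finset.range (m+1), ({t j} : Set ℝ)) := by
            apply (MeasureTheory.measure_eq_zero_iff_ae_notMem).mp
            apply Set.Finite.measure_zero
            exact Set.Finite.biUnion (Finset.range (m+1)).finite_toSet
              (fun _ _ => Set.finite_singleton _)
          filter_upwards [hnodes] with x hnode hxI
          rw [uIoc_of_le ht0tm.le] at hxI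
          obtain ⟨j, hj1, hjm, hxl, hxr⟩ := hcover x hxI.1 hxI.2
          have hxne : x ≠ t j := by
            intro hcontra
            apply hnode
            rw [hcontra]
            exact Set.mem_biUnion (Finset.mem_range.mpr (by omega)) rfl
          have hxIoo : x ∈ Ioo (t (j-1)) (t j) := ⟨hxl, lt_of_le_of_ne hxr hxne⟩
          obtain ⟨h1, h2⟩ := hgood j hj1 hjm x hxIoo
          have hw1 : HasDerivAt (fun s => u s + (ε * η s) • φ i)
              (deriv u x + (ε * η' x) • φ i) x := by
            have h1' : HasDerivAt u (deriv u x) x := by rw [h1.deriv]; exact h1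
            exact h1'.add (((hηd x).const_mul ε).smul_const (φ i))
          have hw2 : HasDerivAt (deriv (fun s => u s + (ε * η s) • φ i))
              (deriv (deriv u) x + (ε * η'' x) • φ i) x := by
            have hbase : HasDerivAt (fun y => deriv u y + (ε * η' y) • φ i)
                (deriv (deriv u) x + (ε * η'' x) • φ i) x := by
              have h2' : HasDerivAt (deriv u) (deriv (deriv u) x) x := by
                rw [h2.deriv]; exact h2
              exact h2'.add (((hηd2 x).const_mul ε).smul_const (φ i))
            apply hbase.congr_of_eventuallyEq
            filter_upwards [Ioo_mem_nhds hxIoo.1 hxIoo.2] with y hy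
            obtain ⟨hy1, _⟩ := hgood j hj1 hjm y hy
            have hy1' : HasDerivAt u (deriv u y) y := by rw [hy1.deriv]; exact hy1
            exact (hy1'.add (((hηd y).const_mul ε).smul_const (φ i))).deriv
          have hFR : forceResidual M D K g (fun s => u s + (ε * η s) • φ i) x
              = forceResidual M D K g u x + (ε * ψ x) • M.mulVec (φ i) := by
            simp only [forceResidual]
            rw [hw2.deriv, hw1.deriv]
            simp only [Matrix.mulVec_add, Matrix.mulVec_smul, hDφvec, hEig i, hψ_def]
            module
          rw [hFR, hdotExp (forceResidual M D K g u x) (ε * ψ x)]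
          simp only [hX_def, hY_def, hr_def]
          ring
        rw [elasticEnergy, elasticEnergy]
        rw [intervalIntegral.integral_congr_ae hae]
        rw [intervalIntegral.integral_add (hXint.add (hYint.const_mul (2*ε)))
          (hIψsq.const_mul (ε^2))]
        rw [intervalIntegral.integral_add hXint (hYint.const_mul (2*ε))]
        rw [intervalIntegral.integral_const_mul, intervalIntegral.integral_const_mul]
        simp only [hX_def]
        ring
      -- #### the first variation vanishes
      have hJ1 : (∫ s in (t 0)..(t m), Y s) = 0 := by
        apply first_variation_zero _ ((∫ s in (t 0)..(t m), (ψ s)^2)/2)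
        intro ε
        have h1 := hmin (fun s => u s + (ε * η s) • φ i) (hwAdm ε)
        rw [hEnergy ε, hCons ε] at h1
        linarith only [h1]
      have hsum : (∫ s in (t 0)..(t m), Y s)
          = (∫ s in (t 0)..aδ, Y s) + (∫ s in aδ..τ, Y s)
            + ((∫ s in τ..bδ, Y s) + (∫ s in bδ..(t m), Y s)) := by
        rw [intervalIntegral.integral_add_adjacent_intervals hY1int hY2int]
        rw [intervalIntegral.integral_add_adjacent_intervals hY3int hY4int]
        rw [intervalIntegral.integral_add_adjacent_intervals (hY1int.trans hY2int)
          (hY3int.trans hY4int)]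
      -- #### integration by parts
      have hη'aδ : η' aδ = 0 := by
        apply hη'far
        have habs : |aδ - τ| = 3*δ := by
          rw [haδ_def, show τ - 3*δ - τ = -(3*δ) by ring, abs_neg,
            abs_of_pos (by linarith only [hδpos] : (0:ℝ) < 3*δ)]
        rw [habs]
        linarith only [hδpos]
      have hη'bδ : η' bδ = 0 := by
        apply hη'far
        have habs : |bδ - τ| = 3*δ := by
          rw [hbδ_def, show τ + 3*δ - τ = 3*δ by ring,
            abs_of_pos (by linarith only [hδpos] : (0:ℝ) < 3*δ)]
        rw [habs]
        linarith only [hδpos]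
      have hQLη'int : IntervalIntegrable (fun s => QL s * η' s) volume aδ τ := by
        apply ContinuousOn.intervalIntegrable
        rw [uIcc_of_le haδτ.le]
        exact (hQLc.mono hIccL2).mul hη'c.continuousOn
      have hGLint : IntervalIntegrable
          (fun s => (c * η' s + lam i * η s) * RL s) volume aδ τ := by
        apply ContinuousOn.intervalIntegrable
        rw [uIcc_of_le haδτ.le]
        exact (((continuous_const.mul hη'c).add
          (continuous_const.mul hηc)).continuousOn).mul (hRLc.mono hIccL2)
      have hRLη''int : IntervalIntegrable (fun s => RL s * η'' s) volume aδ τ := by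
        apply ContinuousOn.intervalIntegrable
        rw [uIcc_of_le haδτ.le]
        exact (hRLc.mono hIccL2).mul hη''c.continuousOn
      have hQRη'int : IntervalIntegrable (fun s => QR s * η' s) volume τ bδ := by
        apply ContinuousOn.intervalIntegrable
        rw [uIcc_of_le hτbδ.le]
        exact (hQRc.mono hIccR2).mul hη'c.continuousOn
      have hGRint : IntervalIntegrable
          (fun s => (c * η' s + lam i * η s) * RR s) volume τ bδ := by
        apply ContinuousOn.intervalIntegrable
        rw [uIcc_of_le hτbδ.le]
        exact (((continuous_const.mul hη'c).add
          (continuous_const.mul hηc)).continuousOn).mul (hRRc.mono hIccR2)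
      have hRRη''int : IntervalIntegrable (fun s => RR s * η'' s) volume τ bδ := by
        apply ContinuousOn.intervalIntegrable
        rw [uIcc_of_le hτbδ.le]
        exact (hRRc.mono hIccR2).mul hη''c.continuousOn
      have hibpL := ibp_aux haδτ.le (hRLc.mono hIccL2) (hQLc.mono hIccL2)
        (fun x hx => hRQL x (hIooL2 hx)) hηd2 hη'c hη''c
      have hibpR := ibp_aux hτbδ.le (hRRc.mono hIccR2) (hQRc.mono hIccR2)
        (fun x hx => hRQR x (hIooR2 hx)) hηd2 hη'c hη''c
      have hsplitL : ∫ s in aδ..τ, ψ s * RL s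
          = (∫ s in aδ..τ, RL s * η'' s)
            + ∫ s in aδ..τ, (c * η' s + lam i * η s) * RL s := by
        rw [← intervalIntegral.integral_add hRLη''int hGLint]
        apply intervalIntegral.integral_congr
        intro x hx
        simp only [hψ_def]
        ring
      have hsplitR : ∫ s in τ..bδ, ψ s * RR s
          = (∫ s in τ..bδ, RR s * η'' s)
            + ∫ s in τ..bδ, (c * η' s + lam i * η s) * RR s := by
        rw [← intervalIntegral.integral_add hRRη''int hGRint]
        apply intervalIntegral.integral_congr
        intro x hx
        simp only [hψ_def]
        ring
      have hLval : ∫ s in aδ..τ, Y s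
          = RL τ - (∫ s in aδ..τ, QL s * η' s)
            + ∫ s in aδ..τ, (c * η' s + lam i * η s) * RL s := by
        rw [hY2val, hsplitL, hibpL, hη'τ, hη'aδ]
        ring
      have hRval : ∫ s in τ..bδ, Y s
          = -(RR τ) - (∫ s in τ..bδ, QR s * η' s)
            + ∫ s in τ..bδ, (c * η' s + lam i * η s) * RR s := by
        rw [hY3val, hsplitR, hibpR, hη'τ, hη'bδ]
        ring
      have hkey : RL τ - RR τ = (∫ s in aδ..τ, QL s * η' s)
          - (∫ s in aδ..τ, (c * η' s + lam i * η s) * RL s)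
          + (∫ s in τ..bδ, QR s * η' s)
          - (∫ s in τ..bδ, (c * η' s + lam i * η s) * RR s) := by
        have h0 := hJ1
        rw [hsum, hY1val, hY4val, hLval, hRval] at h0
        linarith only [h0]
      -- #### bounds
      have hCLnn : 0 ≤ |c| * Bρ' + |lam i| * (δ₀*Bρ) :=
        add_nonneg (mul_nonneg (abs_nonneg _) hBρ'nn)
          (mul_nonneg (abs_nonneg _) (mul_nonneg hδ₀pos.le hBρnn))
      have hηδ₀bd : ∀ x : ℝ, |η x| ≤ δ₀ * Bρ := fun x =>
        le_trans (hηbd x) (mul_le_mul_of_nonneg_right hδlt.le hBρnn)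
      have hnum : ∀ x : ℝ, |c * η' x + lam i * η x| ≤ |c| * Bρ' + |lam i| * (δ₀*Bρ) := by
        intro x
        calc |c * η' x + lam i * η x| ≤ |c * η' x| + |lam i * η x| := abs_add_le _ _
          _ = |c| * |η' x| + |lam i| * |η x| := by rw [abs_mul, abs_mul]
          _ ≤ |c| * Bρ' + |lam i| * (δ₀*Bρ) :=
            add_le_add (mul_le_mul_of_nonneg_left (hη'bd x) (abs_nonneg _))
              (mul_le_mul_of_nonneg_left (hηδ₀bd x) (abs_nonneg _))
      have hb1 : |∫ s in aδ..τ, QL s * η' s| ≤ BQL * Bρ' * (3*δ) := by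
        have hbd : ∀ x ∈ Ι aδ τ, ‖QL x * η' x‖ ≤ BQL * Bρ' := by
          intro x hx
          rw [uIoc_of_le haδτ.le] at hx
          have hxI : x ∈ Icc (t (k-1)) τ := hIccL2 ⟨hx.1.le, hx.2⟩
          rw [Real.norm_eq_abs, abs_mul]
          refine mul_le_mul ?_ (hη'bd x) (abs_nonneg _) hBQLnn
          have h' := hBQL x hxI
          rwa [Real.norm_eq_abs] at h'
        have h := intervalIntegral.norm_integral_le_of_norm_le_const hbd
        rw [Real.norm_eq_abs] at h
        have habs : |τ - aδ| = 3*δ := by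
          rw [haδ_def, show τ - (τ - 3*δ) = 3*δ by ring,
            abs_of_pos (by linarith only [hδpos] : (0:ℝ) < 3*δ)]
        calc |∫ s in aδ..τ, QL s * η' s| ≤ BQL * Bρ' * |τ - aδ| := h
          _ = BQL * Bρ' * (3*δ) := by rw [habs]
      have hb3 : |∫ s in τ..bδ, QR s * η' s| ≤ BQR * Bρ' * (3*δ) := by
        have hbd : ∀ x ∈ Ι τ bδ, ‖QR x * η' x‖ ≤ BQR * Bρ' := by
          intro x hx
          rw [uIoc_of_le hτbδ.le] at hx
          have hxI : x ∈ Icc τ (t (k+1)) := hIccR2 ⟨hx.1.le, hx.2⟩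
          rw [Real.norm_eq_abs, abs_mul]
          refine mul_le_mul ?_ (hη'bd x) (abs_nonneg _) hBQRnn
          have h' := hBQR x hxI
          rwa [Real.norm_eq_abs] at h'
        have h := intervalIntegral.norm_integral_le_of_norm_le_const hbd
        rw [Real.norm_eq_abs] at h
        have habs : |bδ - τ| = 3*δ := by
          rw [hbδ_def, show τ + 3*δ - τ = 3*δ by ring,
            abs_of_pos (by linarith only [hδpos] : (0:ℝ) < 3*δ)]
        calc |∫ s in τ..bδ, QR s * η' s| ≤ BQR * Bρ' * |bδ - τ| := h
          _ = BQR * Bρ' * (3*δ) := by rw [habs]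
      have hb2 : |∫ s in aδ..τ, (c * η' s + lam i * η s) * RL s|
          ≤ ( |c| * Bρ' + |lam i| * (δ₀*Bρ)) * BRL * (3*δ) := by
        have hbd : ∀ x ∈ Ι aδ τ, ‖(c * η' x + lam i * η x) * RL x‖
            ≤ ( |c| * Bρ' + |lam i| * (δ₀*Bρ)) * BRL := by
          intro x hx
          rw [uIoc_of_le haδτ.le] at hx
          have hxI : x ∈ Icc (t (k-1)) τ := hIccL2 ⟨hx.1.le, hx.2⟩
          rw [Real.norm_eq_abs, abs_mul]
          refine mul_le_mul (hnum x) ?_ (abs_nonneg _) hCLnn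
          have h' := hBRL x hxI
          rwa [Real.norm_eq_abs] at h'
        have h := intervalIntegral.norm_integral_le_of_norm_le_const hbd
        rw [Real.norm_eq_abs] at h
        have habs : |τ - aδ| = 3*δ := by
          rw [haδ_def, show τ - (τ - 3*δ) = 3*δ by ring,
            abs_of_pos (by linarith only [hδpos] : (0:ℝ) < 3*δ)]
        calc |∫ s in aδ..τ, (c * η' s + lam i * η s) * RL s|
            ≤ ( |c| * Bρ' + |lam i| * (δ₀*Bρ)) * BRL * |τ - aδ| := h
          _ = ( |c| * Bρ' + |lam i| * (δ₀*Bρ)) * BRL * (3*δ) := by rw [habs]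
      have hb4 : |∫ s in τ..bδ, (c * η' s + lam i * η s) * RR s|
          ≤ ( |c| * Bρ' + |lam i| * (δ₀*Bρ)) * BRR * (3*δ) := by
        have hbd : ∀ x ∈ Ι τ bδ, ‖(c * η' x + lam i * η x) * RR x‖
            ≤ ( |c| * Bρ' + |lam i| * (δ₀*Bρ)) * BRR := by
          intro x hx
          rw [uIoc_of_le hτbδ.le] at hx
          have hxI : x ∈ Icc τ (t (k+1)) := hIccR2 ⟨hx.1.le, hx.2⟩
          rw [Real.norm_eq_abs, abs_mul]
          refine mul_le_mul (hnum x) ?_ (abs_nonneg _) hCLnn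
          have h' := hBRR x hxI
          rwa [Real.norm_eq_abs] at h'
        have h := intervalIntegral.norm_integral_le_of_norm_le_const hbd
        rw [Real.norm_eq_abs] at h
        have habs : |bδ - τ| = 3*δ := by
          rw [hbδ_def, show τ + 3*δ - τ = 3*δ by ring,
            abs_of_pos (by linarith only [hδpos] : (0:ℝ) < 3*δ)]
        calc |∫ s in τ..bδ, (c * η' s + lam i * η s) * RR s|
            ≤ ( |c| * Bρ' + |lam i| * (δ₀*Bρ)) * BRR * |bδ - τ| := h
          _ = ( |c| * Bρ' + |lam i| * (δ₀*Bρ)) * BRR * (3*δ) := by rw [habs]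
      -- #### conclusion of the estimate
      rw [hkey]
      calc |(∫ s in aδ..τ, QL s * η' s)
          - (∫ s in aδ..τ, (c * η' s + lam i * η s) * RL s)
          + (∫ s in τ..bδ, QR s * η' s)
          - (∫ s in τ..bδ, (c * η' s + lam i * η s) * RR s)|
          ≤ |∫ s in aδ..τ, QL s * η' s|
            + |∫ s in aδ..τ, (c * η' s + lam i * η s) * RL s|
            + |∫ s in τ..bδ, QR s * η' s|
            + |∫ s in τ..bδ, (c * η' s + lam i * η s) * RR s| := abs_comb_le _ _ _ _
        _ ≤ BQL * Bρ' * (3*δ) + ( |c| * Bρ' + |lam i| * (δ₀*Bρ)) * BRL * (3*δ)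
            + BQR * Bρ' * (3*δ) + ( |c| * Bρ' + |lam i| * (δ₀*Bρ)) * BRR * (3*δ) :=
          add_le_add (add_le_add (add_le_add hb1 hb2) hb3) hb4
        _ = CE * δ := by rw [hCE_def]; ring
    linarith only [h0]
  -- ### conclusion
  have hfin : T (u2L (t k)) = T (u2R (t k)) := by
    have h1 := hmain
    simp only [hRL_def, hRR_def] at h1
    rw [hu1τ] at h1
    linarith only [h1]
  rw [hd2L, hd2R, hfin]
end
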